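/- arXiv:math/0610608 — 5 statements merged into one kernel-verified Lean document; each statement's English description precedes it below -/
import Mathlib

section
/- For all sets X, Y ⊆ ℕ, all n ≥ 1 and all s ≥ 0, the number P_{n,s}^{X,Y} of permutations of {1,…,n} with exactly s X,Y-descents satisfies P_{n,s}^{X,Y} = |X_n^c|! · Σ_{r=0}^{s} (-1)^{s-r} · C(|X_n^c|+r, r) · C(n+1, s-r) · Π_{x ∈ X_n} (1 + r + α_{X,n,x} + β_{Y,n,x}). -/
open scoped Classical
open Finset

/-- Number of `X,Y`-descents of the word `w = w_1 ⋯ w_n` (indices `i` with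
`w_i > w_{i+1}`, `w_i ∈ X`, `w_{i+1} ∈ Y`). -/
noncomputable def desXY (X Y : Set ℕ) {n : ℕ} (w : Fin n → ℕ) : ℕ :=
  (Finset.univ.filter (fun i : Fin n =>
    ∃ h : i.1 + 1 < n, w i > w ⟨i.1 + 1, h⟩ ∧ w i ∈ X ∧ w ⟨i.1 + 1, h⟩ ∈ Y)).card

/-- `permCount X Y n s` is the number of permutations `σ` of `{1,…,n}` with
exactly `s` `X,Y`-descents. -/
noncomputable def permCount (X Y : Set ℕ) (n s : ℕ) : ℕ :=
  (Finset.univ.filter (fun σ : Equiv.Perm (Fin n) =>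
    desXY X Y (fun i => (σ i : ℕ) + 1) = s)).card

/-- `α_{S,n,j} = |{x : j < x ≤ n, x ∉ S}|`. -/
noncomputable def alphaSet (S : Set ℕ) (n j : ℕ) : ℕ :=
  ((Finset.Ioc j n).filter (fun x => x ∉ S)).card

/-- `β_{S,n,j} = |{x : 1 ≤ x < j, x ∉ S}|`. -/
noncomputable def betaSet (S : Set ℕ) (j : ℕ) : ℕ :=
  ((Finset.Ico 1 j).filter (fun x => x ∉ S)).card

/-!
Let `D_n(t) = ∑_σ t ^ des_{X,Y}(σ)`. Every permutation of `[n+1]` arises exactly once by inserting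
the letter `n + 1` into a permutation of `[n]`. Being the largest letter, `n + 1` destroys the
`X,Y`-descent across the gap where it is inserted, if there is one, and creates a new one exactly
when `n + 1 ∈ X` and the next letter lies in `Y`. Summing over the `n + 1` gaps gives
`D_{n+1} = (1 + β + (n - β) t) D_n + t (1 - t) D_n'` if `n + 1 ∈ X` (with `β = β_{Y,n+1,n+1}`)
and `D_{n+1} = (n + 1) D_n + (1 - t) D_n'` otherwise. Writing `D_n = (1 - t)^(n+1) W_n`, these
become `W_{n+1,r} = (1 + r + β) W_{n,r}` and `W_{n+1,r} = (r + 1) W_{n,r+1}`, which are satisfied by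
`W_{n,r} = |X_n^c|! C(|X_n^c| + r, r) ∏_{x ∈ X_n} (1 + r + α_{X,n,x} + β_{Y,n,x})`. The formula is
the coefficient of `t^s` in `(1 - t)^(n+1) W_n`.
-/

noncomputable section Descents

variable (X Y : Set ℕ)

def desPair (a b : ℕ) : ℕ := if b < a ∧ a ∈ X ∧ b ∈ Y then 1 else 0

def listDes : List ℕ → ℕ
  | a :: b :: l => desPair X Y a b + listDes (b :: l)
  | _ => 0

def desJunction (l m : List ℕ) : ℕ := listDes X Y (l.getLast?.toList ++ m.head?.toList)

variable {X Y}

@[simp] theorem listDes_nil : listDes X Y [] = 0 := rfl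

@[simp] theorem listDes_singleton (a : ℕ) : listDes X Y [a] = 0 := rfl

theorem desPair_le_one (a b : ℕ) : desPair X Y a b ≤ 1 := by
  unfold desPair; split <;> simp

theorem listDes_cons (a : ℕ) (l : List ℕ) :
    listDes X Y (a :: l) = desJunction X Y [a] l + listDes X Y l := by
  cases l <;> simp [listDes, desJunction]

theorem listDes_append (l m : List ℕ) :
    listDes X Y (l ++ m) = listDes X Y l + desJunction X Y l m + listDes X Y m := by
  induction l with
  | nil => cases m <;> simp [listDes, desJunction]
  | cons a l ih =>
    cases l with
    | nil => simp [listDes_cons, listDes]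
    | cons b l => simp only [List.cons_append, listDes, desJunction] at ih ⊢; simp [ih]; omega

theorem desJunction_singleton_cons (a b : ℕ) (m : List ℕ) :
    desJunction X Y [a] (b :: m) = desPair X Y a b := by
  simp [desJunction, listDes]

theorem desJunction_cons_take (a : ℕ) (l : List ℕ) (k : ℕ) :
    desJunction X Y (a :: l.take k) (l.drop k) =
      desJunction X Y (l.take k) (l.drop k) + if k = 0 then desJunction X Y [a] l else 0 := by
  rcases k with _ | k
  · cases l <;> simp [desJunction]
  · rcases l with _ | ⟨b, l⟩ <;> simp [desJunction, List.getLast?_cons]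

theorem listDes_append_cons_of_lt (l m : List ℕ) (M : ℕ) (hM : ∀ x ∈ l, x < M) :
    listDes X Y (l ++ M :: m) + desJunction X Y l m =
      listDes X Y (l ++ m) + desJunction X Y [M] m := by
  have hlast : desJunction X Y l (M :: m) = 0 := by
    rcases h : l.getLast? with _ | x
    · simp [desJunction, h]
    · have hx : x < M := hM x (List.mem_of_getLast? h)
      simp [desJunction, h, listDes, desPair, hx.not_gt]
  rw [listDes_append, listDes_append, listDes_cons, hlast]
  ring

theorem sum_desJunction_take_drop (l : List ℕ) :
    ∑ k ∈ Finset.range (l.length + 1), desJunction X Y (l.take k) (l.drop k) = listDes X Y l := by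
  induction l with
  | nil => simp [desJunction, listDes]
  | cons a l ih =>
    rw [List.length_cons, Finset.sum_range_succ']
    simp only [List.take_succ_cons, List.drop_succ_cons, desJunction_cons_take,
      Finset.sum_add_distrib, ih, Finset.sum_ite_eq', Finset.mem_range, listDes_cons]
    simp [desJunction, add_comm]

theorem sum_desJunction_singleton_drop (M : ℕ) (l : List ℕ) :
    ∑ k ∈ Finset.range (l.length + 1), desJunction X Y [M] (l.drop k) =
      (l.map (desPair X Y M)).sum := by
  induction l with
  | nil => simp [desJunction]
  | cons a l ih =>
    rw [List.length_cons, Finset.sum_range_succ']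
    simp [ih, desJunction_singleton_cons, add_comm]

theorem desXY_eq_listDes {n : ℕ} (w : Fin n → ℕ) :
    desXY X Y w = listDes X Y (List.ofFn w) := by
  induction n with
  | zero => simp [desXY]
  | succ n ih =>
    rw [List.ofFn_succ, listDes_cons, ← ih, desXY, desXY, Finset.card_filter, Finset.card_filter,
      Fin.sum_univ_succ]
    congr 1
    · cases n with
      | zero => rw [if_neg fun ⟨h, _⟩ => absurd h (by simp)]; simp [desJunction]
      | succ n => simp [List.ofFn_succ, desJunction_singleton_cons, desPair]
    · refine Finset.sum_congr rfl fun i _ => ?_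
      simp [Fin.succ]

theorem desJunction_le_one (l m : List ℕ) : desJunction X Y l m ≤ 1 := by
  unfold desJunction
  rcases l.getLast? with _ | a <;> rcases m.head? with _ | b <;> simp [listDes, desPair_le_one]

theorem desJunction_singleton_eq_zero {M : ℕ} (hM : M ∉ X) (m : List ℕ) :
    desJunction X Y [M] m = 0 := by
  cases m <;> simp [desJunction, listDes, desPair, hM]

theorem desJunction_le_desJunction_singleton {M : ℕ} (hM : M ∈ X) (l m : List ℕ)
    (hm : ∀ y ∈ m, y < M) : desJunction X Y l m ≤ desJunction X Y [M] m := by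
  rcases m with _ | ⟨b, m⟩
  · unfold desJunction; rcases l.getLast? <;> simp
  · rw [desJunction_singleton_cons]
    unfold desJunction
    rcases l.getLast? with _ | a
    · simp
    · simp only [Option.toList_some, List.head?_cons, List.cons_append, List.nil_append, listDes,
        desPair, add_zero]
      have hb := hm b (by simp)
      split_ifs <;> simp_all

end Descents

namespace PowerSeries

variable {R : Type*} [CommRing R]

theorem coeff_one_sub_X_pow (m i : ℕ) :
    coeff i ((1 - X : R⟦X⟧) ^ m) = (-1) ^ i * (m.choose i : R) := by
  induction m generalizing i with
  | zero => cases i <;> simp [coeff_one]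
  | succ m ih =>
    rw [pow_succ, mul_sub, mul_one, map_sub]
    cases i with
    | zero => simp [ih]
    | succ i => rw [coeff_succ_mul_X, ih, ih, Nat.choose_succ_succ']; push_cast; ring

theorem coeff_one_sub_X_pow_mul (m s : ℕ) (a : ℕ → R) :
    coeff s ((1 - X : R⟦X⟧) ^ m * mk a) =
      ∑ r ∈ Finset.range (s + 1), (-1) ^ (s - r) * (m.choose (s - r) : R) * a r := by
  rw [mul_comm, coeff_mul,
    Finset.Nat.sum_antidiagonal_eq_sum_range_succ (fun i j => coeff i (mk a) * coeff j _)]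
  simp only [coeff_mk, coeff_one_sub_X_pow]
  exact Finset.sum_congr rfl fun r _ => by ring

theorem X_mul_derivative_X_pow (m : ℕ) :
    X * d⁄dX R (X ^ m) = (m : R⟦X⟧) * X ^ m := by
  rw [derivative_pow, derivative_X, mul_one]
  cases m with
  | zero => simp
  | succ m => simp only [Nat.add_sub_cancel]; ring

theorem derivative_one_sub_X_pow_succ_mul (n : ℕ) (A : R⟦X⟧) :
    d⁄dX R ((1 - X) ^ (n + 1) * A) = (1 - X) ^ n * ((1 - X) * d⁄dX R A - ((n : R⟦X⟧) + 1) * A) := by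
  rw [Derivation.leibniz, derivative_pow, map_sub, derivative_one, derivative_X,
    Nat.add_sub_cancel, smul_eq_mul, smul_eq_mul]
  push_cast
  ring

theorem one_sub_X_pow_mul_derivative (n : ℕ) (A : R⟦X⟧) :
    (1 - X) ^ (n + 2) * d⁄dX R A =
      ((n : R⟦X⟧) + 1) * ((1 - X) ^ (n + 1) * A) + (1 - X) * d⁄dX R ((1 - X) ^ (n + 1) * A) := by
  rw [derivative_one_sub_X_pow_succ_mul]
  ring

theorem one_sub_X_pow_mul_C_add_X_mul_derivative {n : ℕ} {c ℓ : R} (h : c + ℓ = n + 1)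
    (A : R⟦X⟧) :
    (1 - X) ^ (n + 2) * (C c * A + X * d⁄dX R A) =
      (C c + C ℓ * X) * ((1 - X) ^ (n + 1) * A) +
        X * (1 - X) * d⁄dX R ((1 - X) ^ (n + 1) * A) := by
  rw [derivative_one_sub_X_pow_succ_mul, eq_sub_of_add_eq h]
  simp only [map_sub, map_add, map_natCast, map_one]
  ring

end PowerSeries

open PowerSeries

local notation "T" => (PowerSeries.X : PowerSeries ℤ)

section InsertMax

variable {X Y : Set ℕ} {M : ℕ} {l : List ℕ}

theorem listDes_insert_add_desJunction (hl : ∀ x ∈ l, x < M) (k : ℕ) :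
    listDes X Y (l.take k ++ M :: l.drop k) + desJunction X Y (l.take k) (l.drop k) =
      listDes X Y l + desJunction X Y [M] (l.drop k) := by
  simpa only [List.take_append_drop] using
    listDes_append_cons_of_lt (l.take k) (l.drop k) M fun x hx => hl x (List.mem_of_mem_take hx)

theorem sum_X_pow_listDes_insert_of_mem (hM : M ∈ X) (hl : ∀ x ∈ l, x < M) :
    ∑ k ∈ Finset.range (l.length + 1), T ^ listDes X Y (l.take k ++ M :: l.drop k) =
      (C ((l.length : ℤ) + 1 - (l.map (desPair X Y M)).sum) +
          C ((l.map (desPair X Y M)).sum : ℤ) * T) * T ^ listDes X Y l +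
        T * (1 - T) * d⁄dX ℤ (T ^ listDes X Y l) := by
  set s := listDes X Y l with hs
  have hterm : ∀ k ∈ Finset.range (l.length + 1),
      T ^ listDes X Y (l.take k ++ M :: l.drop k) = T ^ s +
        ((desJunction X Y [M] (l.drop k) : ℤ⟦X⟧) - desJunction X Y (l.take k) (l.drop k)) *
          (T ^ (s + 1) - T ^ s) := by
    intro k _
    have hsum := listDes_insert_add_desJunction (X := X) (Y := Y) hl k
    have hle := desJunction_le_desJunction_singleton (Y := Y) hM (l.take k) (l.drop k)
      fun y hy => hl y (List.mem_of_mem_drop hy)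
    have hone := desJunction_le_one (X := X) (Y := Y) [M] (l.drop k)
    obtain h | ⟨h0, h1⟩ : desJunction X Y (l.take k) (l.drop k) = desJunction X Y [M] (l.drop k) ∨
        desJunction X Y (l.take k) (l.drop k) = 0 ∧ desJunction X Y [M] (l.drop k) = 1 := by
      omega
    · rw [h, sub_self, zero_mul, add_zero]; congr 1; omega
    · rw [h0, h1]; simp only [Nat.cast_one, Nat.cast_zero, sub_zero, one_mul, add_sub_cancel]
      congr 1; omega
  rw [Finset.sum_congr rfl hterm, Finset.sum_add_distrib, ← Finset.sum_mul, Finset.sum_sub_distrib,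
    ← Nat.cast_sum, ← Nat.cast_sum, sum_desJunction_singleton_drop, sum_desJunction_take_drop,
    Finset.sum_const, Finset.card_range, nsmul_eq_mul, mul_assoc, mul_comm (1 - T), ← mul_assoc,
    X_mul_derivative_X_pow]
  simp only [map_sub, map_add, map_natCast, map_one, ← hs]
  push_cast
  ring

theorem sum_X_pow_listDes_insert_of_not_mem (hM : M ∉ X) (hl : ∀ x ∈ l, x < M) :
    ∑ k ∈ Finset.range (l.length + 1), T ^ listDes X Y (l.take k ++ M :: l.drop k) =
      (l.length + 1 : ℤ⟦X⟧) * T ^ listDes X Y l + (1 - T) * d⁄dX ℤ (T ^ listDes X Y l) := by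
  set s := listDes X Y l with hs
  have hterm : ∀ k ∈ Finset.range (l.length + 1),
      T ^ listDes X Y (l.take k ++ M :: l.drop k) = T ^ s +
        (desJunction X Y (l.take k) (l.drop k) : ℤ⟦X⟧) * (T ^ (s - 1) - T ^ s) := by
    intro k _
    have hsum := listDes_insert_add_desJunction (X := X) (Y := Y) hl k
    rw [desJunction_singleton_eq_zero hM] at hsum
    have hone := desJunction_le_one (X := X) (Y := Y) (l.take k) (l.drop k)
    obtain h0 | h1 : desJunction X Y (l.take k) (l.drop k) = 0 ∨
        desJunction X Y (l.take k) (l.drop k) = 1 := by omega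
    · rw [h0]; simp only [Nat.cast_zero, zero_mul, add_zero]; congr 1; omega
    · rw [h1]; simp only [Nat.cast_one, one_mul, add_sub_cancel]; congr 1; omega
  rw [Finset.sum_congr rfl hterm, Finset.sum_add_distrib, ← Finset.sum_mul, ← Nat.cast_sum,
    sum_desJunction_take_drop, Finset.sum_const, Finset.card_range, nsmul_eq_mul, sub_mul, one_mul,
    X_mul_derivative_X_pow, derivative_pow, derivative_X, mul_one, ← hs]
  push_cast
  ring

end InsertMax

theorem List.ofFn_insertNth {α : Type*} {n : ℕ} (p : Fin (n + 1)) (a : α) (f : Fin n → α) :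
    List.ofFn (p.insertNth a f) = (List.ofFn f).take p ++ a :: (List.ofFn f).drop p := by
  induction n with
  | zero => simp [Fin.fin_one_eq_zero p, Fin.insertNth_zero']
  | succ n ih =>
    cases p using Fin.cases with
    | zero => simp [Fin.insertNth_zero']
    | succ p =>
      rw [← Fin.cons_self_tail f, Fin.insertNth_succ_cons, List.ofFn_cons, List.ofFn_cons, ih]
      simp

namespace Equiv.Perm

/-- The permutation whose one-line word is that of `σ` with the new largest value inserted at
position `p`. -/
def insertMaxAt {n : ℕ} (σ : Perm (Fin n)) (p : Fin (n + 1)) : Perm (Fin (n + 1)) :=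
  (finSuccEquiv' p).trans ((Equiv.optionCongr σ).trans (finSuccEquiv' (Fin.last n)).symm)

variable {n : ℕ}

@[simp] theorem insertMaxAt_apply_self (σ : Perm (Fin n)) (p : Fin (n + 1)) :
    insertMaxAt σ p p = Fin.last n := by
  simp [insertMaxAt, finSuccEquiv'_at, finSuccEquiv'_symm_none]

@[simp] theorem insertMaxAt_apply_succAbove (σ : Perm (Fin n)) (p : Fin (n + 1)) (j : Fin n) :
    insertMaxAt σ p (p.succAbove j) = (σ j).castSucc := by
  simp [insertMaxAt, Fin.succAbove_last]

theorem insertMaxAt_bijective :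
    Function.Bijective fun x : Perm (Fin n) × Fin (n + 1) => insertMaxAt x.1 x.2 := by
  rw [Fintype.bijective_iff_injective_and_card]
  refine ⟨?_, by simp [Fintype.card_perm, Nat.factorial_succ, mul_comm]⟩
  rintro ⟨σ, p⟩ ⟨τ, q⟩ h
  simp only at h
  obtain rfl : p = q := (insertMaxAt τ q).injective <| by
    rw [← h, insertMaxAt_apply_self, h, insertMaxAt_apply_self]
  refine congrArg₂ _ (Equiv.ext fun j => ?_) rfl
  simpa using congrArg (· (p.succAbove j)) h

theorem sum_perm_succ {M : Type*} [AddCommMonoid M] (f : Perm (Fin (n + 1)) → M) :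
    ∑ τ, f τ = ∑ σ : Perm (Fin n), ∑ p, f (insertMaxAt σ p) := by
  rw [← Fintype.sum_prod_type']
  exact (Fintype.sum_bijective _ insertMaxAt_bijective _ _ fun _ => rfl).symm

theorem ofFn_insertMaxAt (σ : Perm (Fin n)) (p : Fin (n + 1)) :
    List.ofFn (fun i => (insertMaxAt σ p i : ℕ) + 1) =
      (List.ofFn fun i => (σ i : ℕ) + 1).take p ++ (n + 1) ::
        (List.ofFn fun i => (σ i : ℕ) + 1).drop p := by
  rw [← List.ofFn_insertNth]
  congr 1
  ext i
  cases i using Fin.succAboveCases p <;> simp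

end Equiv.Perm

noncomputable section DescentSeries

variable (X Y : Set ℕ)

def desSeries (n : ℕ) : ℤ⟦X⟧ :=
  ∑ σ : Equiv.Perm (Fin n), T ^ desXY X Y (fun i => (σ i : ℕ) + 1)

variable {X Y}

theorem coeff_desSeries (n s : ℕ) : coeff s (desSeries X Y n) = permCount X Y n s := by
  simp [desSeries, coeff_X_pow, permCount, Finset.sum_boole, eq_comm]

theorem desSeries_zero : desSeries X Y 0 = 1 := by
  simp [desSeries, desXY]

theorem betaSet_succ (n : ℕ) :
    betaSet Y (n + 1) = ∑ j : Fin n, if (j : ℕ) + 1 ∉ Y then 1 else 0 := by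
  rw [betaSet, Finset.card_filter, Finset.sum_Ico_eq_sum_range, Nat.add_sub_cancel,
    ← Fin.sum_univ_eq_sum_range (fun j => if 1 + j ∉ Y then 1 else 0)]
  simp only [add_comm 1]

theorem sum_desPair_ofFn_perm {n : ℕ} (hX : n + 1 ∈ X) (σ : Equiv.Perm (Fin n)) :
    ((List.ofFn fun i => (σ i : ℕ) + 1).map (desPair X Y (n + 1))).sum + betaSet Y (n + 1) = n := by
  have hpair : ∀ j : Fin n, desPair X Y (n + 1) ((j : ℕ) + 1) +
      (if (j : ℕ) + 1 ∉ Y then 1 else 0) = 1 := fun j => by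
    by_cases hj : (j : ℕ) + 1 ∈ Y <;> simp [desPair, hX, hj]
  rw [List.map_ofFn, List.sum_ofFn, betaSet_succ]
  simp only [Function.comp_apply]
  rw [Equiv.sum_comp σ (fun j => desPair X Y (n + 1) ((j : ℕ) + 1)), ← Finset.sum_add_distrib]
  simp only [hpair, Finset.sum_const, Finset.card_univ, Fintype.card_fin, smul_eq_mul, mul_one]

theorem forall_mem_ofFn_perm_lt {n : ℕ} (σ : Equiv.Perm (Fin n)) :
    ∀ x ∈ List.ofFn (fun i => (σ i : ℕ) + 1), x < n + 1 := by
  simp [List.mem_ofFn]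

theorem desSeries_succ (n : ℕ) :
    desSeries X Y (n + 1) = ∑ σ : Equiv.Perm (Fin n),
      let l := List.ofFn fun i => (σ i : ℕ) + 1
      ∑ k ∈ Finset.range (l.length + 1), T ^ listDes X Y (l.take k ++ (n + 1) :: l.drop k) := by
  rw [desSeries, Equiv.Perm.sum_perm_succ]
  refine Finset.sum_congr rfl fun σ _ => ?_
  simp only [desXY_eq_listDes, Equiv.Perm.ofFn_insertMaxAt, List.length_ofFn]
  set l := List.ofFn fun i => (σ i : ℕ) + 1
  exact Fin.sum_univ_eq_sum_range (fun k => T ^ listDes X Y (l.take k ++ (n + 1) :: l.drop k)) _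

theorem desSeries_succ_of_mem {n : ℕ} (hX : n + 1 ∈ X) :
    desSeries X Y (n + 1) =
      (C (1 + (betaSet Y (n + 1) : ℤ)) + C ((n : ℤ) - betaSet Y (n + 1)) * T) * desSeries X Y n +
        T * (1 - T) * d⁄dX ℤ (desSeries X Y n) := by
  rw [desSeries_succ, desSeries, map_sum, Finset.mul_sum, Finset.mul_sum, ← Finset.sum_add_distrib]
  refine Finset.sum_congr rfl fun σ _ => ?_
  have hsum : (((List.ofFn fun i => (σ i : ℕ) + 1).map (desPair X Y (n + 1))).sum : ℤ) =
      n - betaSet Y (n + 1) := by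
    rw [eq_sub_iff_add_eq]; exact_mod_cast sum_desPair_ofFn_perm hX σ
  rw [sum_X_pow_listDes_insert_of_mem hX (forall_mem_ofFn_perm_lt σ), hsum, List.length_ofFn,
    desXY_eq_listDes, show (n : ℤ) + 1 - (n - betaSet Y (n + 1)) = 1 + betaSet Y (n + 1) by ring]

theorem desSeries_succ_of_not_mem {n : ℕ} (hX : n + 1 ∉ X) :
    desSeries X Y (n + 1) =
      (n + 1 : ℤ⟦X⟧) * desSeries X Y n + (1 - T) * d⁄dX ℤ (desSeries X Y n) := by
  rw [desSeries_succ, desSeries, map_sum, Finset.mul_sum, Finset.mul_sum, ← Finset.sum_add_distrib]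
  refine Finset.sum_congr rfl fun σ _ => ?_
  rw [sum_X_pow_listDes_insert_of_not_mem hX (forall_mem_ofFn_perm_lt σ), List.length_ofFn,
    desXY_eq_listDes]

end DescentSeries

noncomputable section Weights

variable (X Y : Set ℕ)

def complCard (n : ℕ) : ℕ :=
  ((Finset.Icc 1 n).filter (fun x => x ∉ X)).card

def weightProd (n r : ℕ) : ℤ :=
  ∏ x ∈ (Finset.Icc 1 n).filter (fun x => x ∈ X),
    (1 + (r : ℤ) + (alphaSet X n x : ℤ) + (betaSet Y x : ℤ))

def weightSeries (n : ℕ) : ℤ⟦X⟧ :=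
  mk fun r =>
    (Nat.factorial (complCard X n) : ℤ) * ((complCard X n + r).choose r : ℤ) * weightProd X Y n r

variable {X Y} {n : ℕ}

theorem complCard_succ_of_mem (hX : n + 1 ∈ X) : complCard X (n + 1) = complCard X n := by
  rw [complCard, ← Finset.insert_Icc_right_eq_Icc_add_one (by omega), Finset.filter_insert,
    if_neg (not_not.2 hX), complCard]

theorem complCard_succ_of_not_mem (hX : n + 1 ∉ X) : complCard X (n + 1) = complCard X n + 1 := by
  rw [complCard, ← Finset.insert_Icc_right_eq_Icc_add_one (by omega), Finset.filter_insert,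
    if_pos hX, Finset.card_insert_of_notMem (by simp), complCard]

theorem alphaSet_succ {x : ℕ} (hx : x ≤ n) :
    alphaSet X (n + 1) x = alphaSet X n x + if n + 1 ∈ X then 0 else 1 := by
  rw [alphaSet, ← Finset.insert_Ioc_right_eq_Ioc_add_one hx, Finset.filter_insert, alphaSet]
  split_ifs <;> simp_all [Finset.card_insert_of_notMem]

theorem weightProd_succ_of_mem (hX : n + 1 ∈ X) (r : ℕ) :
    weightProd X Y (n + 1) r = (1 + r + betaSet Y (n + 1)) * weightProd X Y n r := by
  rw [weightProd, ← Finset.insert_Icc_right_eq_Icc_add_one (by omega), Finset.filter_insert,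
    if_pos hX, Finset.prod_insert (by simp), weightProd, alphaSet, Finset.Ioc_self]
  simp only [Finset.filter_empty, Finset.card_empty, Nat.cast_zero, add_zero]
  congr 1
  refine Finset.prod_congr rfl fun x hx => ?_
  rw [alphaSet_succ (Finset.mem_Icc.1 (Finset.mem_filter.1 hx).1).2, if_pos hX, add_zero]

theorem weightProd_succ_of_not_mem (hX : n + 1 ∉ X) (r : ℕ) :
    weightProd X Y (n + 1) r = weightProd X Y n (r + 1) := by
  rw [weightProd, ← Finset.insert_Icc_right_eq_Icc_add_one (by omega), Finset.filter_insert,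
    if_neg hX, weightProd]
  refine Finset.prod_congr rfl fun x hx => ?_
  rw [alphaSet_succ (Finset.mem_Icc.1 (Finset.mem_filter.1 hx).1).2, if_neg hX]
  push_cast
  ring

theorem weightSeries_zero : weightSeries X Y 0 = PowerSeries.mk 1 := by
  ext r
  simp [weightSeries, complCard, weightProd]

theorem weightSeries_succ_of_mem (hX : n + 1 ∈ X) :
    weightSeries X Y (n + 1) =
      C (1 + (betaSet Y (n + 1) : ℤ)) * weightSeries X Y n + T * d⁄dX ℤ (weightSeries X Y n) := by
  ext r
  rw [map_add, coeff_C_mul]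
  rcases r with _ | r
  · rw [coeff_zero_X_mul]
    simp [weightSeries, complCard_succ_of_mem hX, weightProd_succ_of_mem hX]
    ring
  · rw [coeff_succ_X_mul, coeff_derivative]
    simp only [weightSeries, coeff_mk, complCard_succ_of_mem hX, weightProd_succ_of_mem hX]
    push_cast
    ring

theorem succ_mul_choose_add_succ (k r : ℕ) :
    (k + 1) * (k + 1 + r).choose r = (k + (r + 1)).choose (r + 1) * (r + 1) := by
  have h := Nat.choose_succ_right_eq (k + r + 1) r
  rw [show k + r + 1 - r = k + 1 by omega] at h
  rw [show k + (r + 1) = k + r + 1 by omega, h, show k + 1 + r = k + r + 1 by omega, mul_comm]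

theorem weightSeries_succ_of_not_mem (hX : n + 1 ∉ X) :
    weightSeries X Y (n + 1) = d⁄dX ℤ (weightSeries X Y n) := by
  ext r
  have h : ((complCard X n : ℤ) + 1) * ((complCard X n + 1 + r).choose r : ℕ) =
      ((complCard X n + (r + 1)).choose (r + 1) : ℕ) * ((r : ℤ) + 1) := by
    exact_mod_cast succ_mul_choose_add_succ (complCard X n) r
  simp only [weightSeries, coeff_mk, coeff_derivative, complCard_succ_of_not_mem hX,
    weightProd_succ_of_not_mem hX, Nat.factorial_succ]
  push_cast
  linear_combination ((Nat.factorial (complCard X n) : ℤ) * weightProd X Y n (r + 1)) * h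

end Weights

theorem desSeries_eq_one_sub_X_pow_mul_weightSeries (X Y : Set ℕ) (n : ℕ) :
    desSeries X Y n = (1 - T) ^ (n + 1) * weightSeries X Y n := by
  induction n with
  | zero => rw [desSeries_zero, weightSeries_zero, zero_add, pow_one, mul_comm,
      mk_one_mul_one_sub_eq_one]
  | succ n ih =>
    by_cases hX : n + 1 ∈ X
    · rw [desSeries_succ_of_mem hX, ih, weightSeries_succ_of_mem hX]
      exact (one_sub_X_pow_mul_C_add_X_mul_derivative (by ring) _).symm
    · rw [desSeries_succ_of_not_mem hX, ih, weightSeries_succ_of_not_mem hX]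
      exact (one_sub_X_pow_mul_derivative n _).symm

theorem stmt0_general (X Y : Set ℕ) (n s : ℕ) :
    (permCount X Y n s : ℤ) =
      (Nat.factorial (((Finset.Icc 1 n).filter (fun x => x ∉ X)).card) : ℤ) *
        ∑ r ∈ Finset.range (s + 1),
          (-1) ^ (s - r) *
            (Nat.choose ((((Finset.Icc 1 n).filter (fun x => x ∉ X)).card) + r) r : ℤ) *
            (Nat.choose (n + 1) (s - r) : ℤ) *
            ∏ x ∈ (Finset.Icc 1 n).filter (fun x => x ∈ X),
              (1 + (r : ℤ) + (alphaSet X n x : ℤ) + (betaSet Y x : ℤ)) := by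
  rw [← coeff_desSeries, desSeries_eq_one_sub_X_pow_mul_weightSeries, weightSeries,
    coeff_one_sub_X_pow_mul, Finset.mul_sum]
  exact Finset.sum_congr rfl fun r _ => by rw [complCard, weightProd]; ring

theorem stmt0 (X Y : Set ℕ) (n s : ℕ) (hn : 1 ≤ n) :
    (permCount X Y n s : ℤ) =
      (Nat.factorial (((Finset.Icc 1 n).filter (fun x => x ∉ X)).card) : ℤ) *
        ∑ r ∈ Finset.range (s + 1),
          (-1) ^ (s - r) *
            (Nat.choose ((((Finset.Icc 1 n).filter (fun x => x ∉ X)).card) + r) r : ℤ) *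
            (Nat.choose (n + 1) (s - r) : ℤ) *
            ∏ x ∈ (Finset.Icc 1 n).filter (fun x => x ∈ X),
              (1 + (r : ℤ) + (alphaSet X n x : ℤ) + (betaSet Y x : ℤ)) :=
  stmt0_general X Y n s
end

section
/- Let X, Y ⊆ ℕ and for n, s, t ≥ 0 let P_{n,s,t}^{X,Y} be the number of permutations σ of {1,…,n} with des_{X,Y}(σ) = s if t = |Y_n^c|, and 0 otherwise (with P_{0,0,0}^{X,Y} = 1). Then for all n ≥ 0: (a) if n+1 ∉ X and n+1 ∉ Y, then P_{n+1,s,t}^{X,Y} = (s+1)·P_{n,s+1,t-1}^{X,Y} + (n+1-s)·P_{n,s,t-1}^{X,Y}; (b) if n+1 ∉ X and n+1 ∈ Y, then P_{n+1,s,t}^{X,Y} = (s+1)·P_{n,s+1,t}^{X,Y} + (n+1-s)·P_{n,s,t}^{X,Y}; (c) if n+1 ∈ X and n+1 ∉ Y, then P_{n+1,s,t}^{X,Y} = (s+t)·P_{n,s,t-1}^{X,Y} + (n+2-s-t)·P_{n,s-1,t-1}^{X,Y}; (d) if n+1 ∈ X and n+1 ∈ Y, then P_{n+1,s,t}^{X,Y}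 = (s+t+1)·P_{n,s,t}^{X,Y} + (n+1-s-t)·P_{n,s-1,t}^{X,Y}. -/
open scoped Classical
open Finset

/-- `permCountT X Y n s t` is the number of permutations `σ` of `{1,…,n}` with
`des_{X,Y}(σ) = s` if `t = |Y_n^c|`, and `0` otherwise; indices `s, t` range over
the integers, negative values giving `0`. -/
noncomputable def permCountT (X Y : Set ℕ) (n : ℕ) (s t : ℤ) : ℕ :=
  (Finset.univ.filter (fun σ : Equiv.Perm (Fin n) =>
    (desXY X Y (fun i => (σ i : ℕ) + 1) : ℤ) = s ∧
    t = (((Finset.Icc 1 n).filter (fun x => x ∉ Y)).card : ℤ))).card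

/-!
Every permutation of `{1,…,n+1}` arises exactly once by inserting the letter `n+1` into the
word of a permutation `σ` of `{1,…,n}`, at one of its `n+1` gaps. Inserting the maximum at a
gap destroys the `X,Y`-descent straddling that gap (if any), creates none ending in `n+1`, and
creates the descent `(n+1) b` exactly when `n+1 ∈ X` and the letter `b` after the gap is in `Y`.
So if `n+1 ∉ X`, the `des(σ)` gaps following a descent lower the count by one and the other
`n+1-des(σ)` gaps keep it. If `n+1 ∈ X`, a destroyed descent always ends in a letter of `Y`, so
the count goes up by one at the `|Y ∩ [n]| - des(σ)` gaps before a letter of `Y` not following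
a descent, and is unchanged at the other `1 + |Y_n^c| + des(σ)` gaps. The index `t` only
records `|Y_n^c|`, which grows by one exactly when `n+1 ∉ Y`.
-/

lemma Fin.val_succAbove_eq_ite {n : ℕ} (p : Fin (n + 1)) (i : Fin n) :
    (p.succAbove i : ℕ) = if (i : ℕ) < p then (i : ℕ) else i + 1 := by
  by_cases h : i.castSucc < p
  · rw [Fin.succAbove_of_castSucc_lt _ _ h, if_pos (by simpa [Fin.lt_def] using h),
      Fin.val_castSucc]
  · rw [Fin.succAbove_of_le_castSucc _ _ (not_lt.mp h), if_neg (by simpa [Fin.lt_def] using h),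
      Fin.val_succ]

lemma Fin.card_filter_univ_succAbove {n : ℕ} (P : Fin (n + 1) → Prop) (p : Fin (n + 1)) :
    #{j | P j} = (if P p then 1 else 0) + #{i | P (p.succAbove i)} := by
  simp only [card_filter, Fin.sum_univ_succAbove _ p]

section FinsetCounting

variable {α β : Type*} [Fintype α]

lemma card_filter_and_ne_add_ite [DecidableEq β] {f : α → β} (hf : Function.Injective f)
    (Q : α → Prop) (b : β) [Decidable (∃ a, f a = b ∧ Q a)] :
    #{a | Q a ∧ f a ≠ b} + (if ∃ a, f a = b ∧ Q a then 1 else 0) = #{a | Q a} := by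
  split_ifs with h
  · obtain ⟨a₀, rfl, ha₀⟩ := h
    have : ({a | Q a ∧ f a ≠ f a₀} : Finset α) = ({a | Q a} : Finset α).erase a₀ := by
      ext a
      simp [hf.ne_iff, and_comm]
    rw [this, card_erase_add_one (by simpa using ha₀)]
  · push Not at h
    rw [add_zero]
    exact congrArg card (filter_congr fun a _ => and_iff_left_of_imp fun ha hab => h a hab ha)

lemma card_filter_exists_eq_and [Fintype β] (f : α ↪ β) (Q : α → Prop)
    [DecidablePred fun b => ∃ a, f a = b ∧ Q a] :
    #{b | ∃ a, f a = b ∧ Q a} = #{a | Q a} := by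
  rw [← card_map f, map_filter']
  congr 1
  ext b
  simpa [and_comm] using fun a _ hab => ⟨a, hab⟩

lemma card_filter_eq_of_eq_add_ite {f : α → ℤ} {c : ℤ} (A : α → Prop) [DecidablePred A]
    (hf : ∀ a, f a = c + if A a then 1 else 0) (s : ℤ) :
    (#{a | f a = s} : ℤ) =
      (if s = c + 1 then (#{a | A a} : ℤ) else 0) + (if s = c then (#{a | ¬A a} : ℤ) else 0) := by
  simp only [hf]
  by_cases h1 : s = c + 1
  · rw [if_pos h1, if_neg (by omega), add_zero]
    exact congrArg _ (congrArg card (filter_congr fun a _ => by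
      by_cases h : A a <;> simp [h] <;> omega))
  by_cases h0 : s = c
  · rw [if_neg h1, if_pos h0, zero_add]
    exact congrArg _ (congrArg card (filter_congr fun a _ => by
      by_cases h : A a <;> simp [h] <;> omega))
  rw [if_neg h1, if_neg h0, add_zero, Nat.cast_eq_zero, card_eq_zero, filter_eq_empty_iff]
  intro a _
  split_ifs <;> omega

end FinsetCounting

section Descents

variable {X Y : Set ℕ} {n : ℕ} {w : Fin n → ℕ} {x : ℕ}

def IsXYDescentAt (X Y : Set ℕ) (w : Fin n → ℕ) (i : Fin n) : Prop :=
  ∃ j : Fin n, (j : ℕ) = i + 1 ∧ w j < w i ∧ w i ∈ X ∧ w j ∈ Y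

lemma desXY_eq_card (X Y : Set ℕ) (w : Fin n → ℕ) :
    desXY X Y w = #{i | IsXYDescentAt X Y w i} := by
  refine congrArg card (filter_congr fun i _ => ⟨?_, ?_⟩)
  · rintro ⟨h, hlt, hX, hY⟩
    exact ⟨⟨i + 1, h⟩, rfl, hlt, hX, hY⟩
  · rintro ⟨⟨j, hj⟩, rfl, hlt, hX, hY⟩
    exact ⟨hj, hlt, hX, hY⟩

lemma IsXYDescentAt.exists_castSucc_eq_succ {i : Fin n} (h : IsXYDescentAt X Y w i) :
    ∃ k : Fin n, k.castSucc = i.succ ∧ w k ∈ Y := by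
  obtain ⟨j, hj, -, -, hjY⟩ := h
  exact ⟨j, Fin.ext hj, hjY⟩

lemma isXYDescentAt_insertNth_self (hx : ∀ i, w i < x) (p : Fin (n + 1)) :
    IsXYDescentAt X Y (Fin.insertNth p x w) p ↔
      x ∈ X ∧ ∃ k : Fin n, k.castSucc = p ∧ w k ∈ Y := by
  have hval (k : Fin n) : (p.succAbove k : ℕ) = p + 1 ↔ k.castSucc = p := by
    rw [Fin.val_succAbove_eq_ite, Fin.ext_iff, Fin.val_castSucc]
    split_ifs <;> omega
  simp only [IsXYDescentAt, Fin.exists_iff_succAbove p, Fin.insertNth_apply_same,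
    Fin.insertNth_apply_succAbove, hval]
  constructor
  · rintro (⟨h, -⟩ | ⟨k, hk, -, hX, hY⟩)
    · omega
    · exact ⟨hX, k, hk, hY⟩
  · rintro ⟨hX, k, hk, hY⟩
    exact .inr ⟨k, hk, hx k, hX, hY⟩

lemma isXYDescentAt_insertNth_succAbove (hx : ∀ i, w i < x) (p : Fin (n + 1)) (i : Fin n) :
    IsXYDescentAt X Y (Fin.insertNth p x w) (p.succAbove i) ↔
      IsXYDescentAt X Y w i ∧ i.succ ≠ p := by
  simp only [IsXYDescentAt, Fin.exists_iff_succAbove p, Fin.insertNth_apply_same,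
    Fin.insertNth_apply_succAbove]
  by_cases hp : i.succ = p
  · subst hp
    have hval (k : Fin n) : (i.succ.succAbove k : ℕ) ≠ i + 1 := by
      rw [Fin.val_succAbove_eq_ite, Fin.val_succ]
      split_ifs <;> omega
    simp [hval, (hx i).not_gt]
  · have hp' : (i : ℕ) + 1 ≠ p := fun h => hp (Fin.ext h)
    have hself : (p : ℕ) ≠ p.succAbove i + 1 := by
      rw [Fin.val_succAbove_eq_ite]
      split_ifs <;> omega
    have hval (k : Fin n) : (p.succAbove k : ℕ) = p.succAbove i + 1 ↔ (k : ℕ) = i + 1 := by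
      rw [Fin.val_succAbove_eq_ite, Fin.val_succAbove_eq_ite]
      split_ifs <;> omega
    simp [hself, hval, hp]

/- Inserting at `p` splits the pair `(w i, w (i+1))` iff `i.succ = p`, and puts `x` right before
`w k` iff `k.castSucc = p`. -/
lemma desXY_insertNth_add (hx : ∀ i, w i < x) (p : Fin (n + 1)) :
    desXY X Y (Fin.insertNth p x w) +
        (if ∃ i, i.succ = p ∧ IsXYDescentAt X Y w i then 1 else 0) =
      desXY X Y w + (if x ∈ X ∧ ∃ k : Fin n, k.castSucc = p ∧ w k ∈ Y then 1 else 0) := by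
  have hsplit := card_filter_and_ne_add_ite (Fin.succ_injective n) (IsXYDescentAt X Y w) p
  rw [desXY_eq_card, desXY_eq_card, Fin.card_filter_univ_succAbove _ p]
  simp only [isXYDescentAt_insertNth_self hx, isXYDescentAt_insertNth_succAbove hx]
  omega

lemma desXY_insertNth_add_of_notMem (hx : ∀ i, w i < x) (hxX : x ∉ X) (p : Fin (n + 1)) :
    desXY X Y (Fin.insertNth p x w) +
        (if ∃ i, i.succ = p ∧ IsXYDescentAt X Y w i then 1 else 0) = desXY X Y w := by
  simpa [hxX] using desXY_insertNth_add (X := X) (Y := Y) hx p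

lemma desXY_insertNth_of_mem (hx : ∀ i, w i < x) (hxX : x ∈ X) (p : Fin (n + 1)) :
    desXY X Y (Fin.insertNth p x w) = desXY X Y w +
      if (∃ k : Fin n, k.castSucc = p ∧ w k ∈ Y) ∧ ¬∃ i, i.succ = p ∧ IsXYDescentAt X Y w i
      then 1 else 0 := by
  have h := desXY_insertNth_add (X := X) (Y := Y) hx p
  simp only [hxX, true_and] at h
  by_cases hp : ∃ i, i.succ = p ∧ IsXYDescentAt X Y w i
  · obtain ⟨i, rfl, hi⟩ := id hp
    rw [if_pos hp, if_pos hi.exists_castSucc_eq_succ] at h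
    simp only [hp, not_true_eq_false, and_false, if_false]
    omega
  · simp only [hp, if_false, not_false_eq_true, and_true] at h ⊢
    omega

end Descents

section Permutations

variable {X Y : Set ℕ} {n : ℕ}

def permWord (σ : Equiv.Perm (Fin n)) : Fin n → ℕ := fun i => (σ i : ℕ) + 1

lemma permWord_lt (σ : Equiv.Perm (Fin n)) (i : Fin n) : permWord σ i < n + 1 := by
  simp [permWord]

/-- The index `s` is an integer, so that `desCount X Y n (-1) = 0`. -/
noncomputable def desCount (X Y : Set ℕ) (n : ℕ) (s : ℤ) : ℕ :=
  #{σ : Equiv.Perm (Fin n) | (desXY X Y (permWord σ) : ℤ) = s}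

def insertMax (p : Fin (n + 1)) (σ : Equiv.Perm (Fin n)) : Equiv.Perm (Fin (n + 1)) :=
  (finSuccEquiv' p).trans (σ.optionCongr.trans finSuccEquivLast.symm)

lemma insertMax_self (p : Fin (n + 1)) (σ : Equiv.Perm (Fin n)) :
    insertMax p σ p = Fin.last n := by
  simp [insertMax]

lemma insertMax_succAbove (p : Fin (n + 1)) (σ : Equiv.Perm (Fin n)) (i : Fin n) :
    insertMax p σ (p.succAbove i) = (σ i).castSucc := by
  simp [insertMax]

lemma permWord_insertMax (p : Fin (n + 1)) (σ : Equiv.Perm (Fin n)) :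
    permWord (insertMax p σ) = Fin.insertNth p (n + 1) (permWord σ) := by
  funext j
  obtain rfl | ⟨i, rfl⟩ := p.eq_self_or_eq_succAbove j <;>
    simp [permWord, insertMax_self, insertMax_succAbove]

lemma insertMax_injective :
    Function.Injective (fun x : Fin (n + 1) × Equiv.Perm (Fin n) => insertMax x.1 x.2) := by
  rintro ⟨p, σ⟩ ⟨q, τ⟩ h
  simp only at h
  obtain rfl : p = q := by
    by_contra hpq
    obtain ⟨i, rfl⟩ := Fin.exists_succAbove_eq hpq
    have h' := congrArg (· (q.succAbove i)) h
    simp only [insertMax_self, insertMax_succAbove] at h'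
    exact (Fin.castSucc_lt_last _).ne h'.symm
  have hστ : σ = τ := Equiv.ext fun i =>
    Fin.castSucc_injective n (by simpa [insertMax_succAbove] using congrArg (· (p.succAbove i)) h)
  rw [hστ]

lemma insertMax_bijective :
    Function.Bijective (fun x : Fin (n + 1) × Equiv.Perm (Fin n) => insertMax x.1 x.2) :=
  (Fintype.bijective_iff_injective_and_card _).mpr
    ⟨insertMax_injective, by simp [Fintype.card_perm, Nat.factorial_succ]⟩

lemma desCount_succ_eq_sum (X Y : Set ℕ) (n : ℕ) (s : ℤ) :
    desCount X Y (n + 1) s = ∑ σ : Equiv.Perm (Fin n),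
      #{p : Fin (n + 1) | (desXY X Y (Fin.insertNth p (n + 1) (permWord σ)) : ℤ) = s} := by
  rw [desCount, card_filter, ← (Equiv.ofBijective _ insertMax_bijective).sum_comp,
    Fintype.sum_prod_type_right]
  simp only [Equiv.ofBijective_apply, permWord_insertMax, card_filter]

end Permutations

section Insertion

variable {X Y : Set ℕ} {n : ℕ}

noncomputable def complCount (Y : Set ℕ) (n : ℕ) : ℕ := #{x ∈ Icc 1 n | x ∉ Y}

lemma card_filter_permWord_mem_add_complCount (σ : Equiv.Perm (Fin n)) :
    #{k | permWord σ k ∈ Y} + complCount Y n = n := by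
  have hσ : #{k | permWord σ k ∈ Y} = #{k : Fin n | (k : ℕ) + 1 ∈ Y} := by
    rw [card_filter, card_filter]
    exact Equiv.sum_comp σ (fun k : Fin n => if (k : ℕ) + 1 ∈ Y then 1 else 0)
  have hshift : #{k : Fin n | (k : ℕ) + 1 ∉ Y} = complCount Y n := by
    refine card_nbij (fun k => (k : ℕ) + 1) ?_ ?_ ?_
    · intro k hk
      simp only [coe_filter, mem_univ, true_and, Set.mem_ofPred_eq, mem_Icc] at hk ⊢
      exact ⟨⟨by omega, k.isLt⟩, hk⟩
    · intro a _ b _ h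
      exact Fin.ext (by simpa using h)
    · intro x hx
      simp only [coe_filter, Set.mem_ofPred_eq, mem_Icc] at hx
      exact ⟨⟨x - 1, by omega⟩, by simp [show x - 1 + 1 = x by omega, hx.2], by simp; omega⟩
  rw [hσ, ← hshift, card_filter_add_card_filter_not, card_univ, Fintype.card_fin]

lemma card_desXY_insertNth_eq_of_notMem (hX : n + 1 ∉ X) (σ : Equiv.Perm (Fin n)) (s : ℤ) :
    (#{p | (desXY X Y (Fin.insertNth p (n + 1) (permWord σ)) : ℤ) = s} : ℤ) =
      (if (desXY X Y (permWord σ) : ℤ) = s + 1 then s + 1 else 0) +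
        (if (desXY X Y (permWord σ) : ℤ) = s then (n : ℤ) + 1 - s else 0) := by
  set afterDescent : Fin (n + 1) → Prop :=
    fun p => ∃ i, i.succ = p ∧ IsXYDescentAt X Y (permWord σ) i
  have hafter : #{p | afterDescent p} = desXY X Y (permWord σ) := by
    rw [desXY_eq_card, ← card_filter_exists_eq_and (Fin.succEmb n)]
    rfl
  have hcompl := card_filter_add_card_filter_not (s := univ) afterDescent
  rw [card_univ, Fintype.card_fin, hafter] at hcompl
  have hdes (p : Fin (n + 1)) : (desXY X Y (Fin.insertNth p (n + 1) (permWord σ)) : ℤ) =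
      (desXY X Y (permWord σ) - 1) + if ¬afterDescent p then 1 else 0 := by
    have := desXY_insertNth_add_of_notMem (Y := Y) (permWord_lt σ) hX p
    split_ifs at * <;> omega
  rw [card_filter_eq_of_eq_add_ite _ hdes]
  simp only [not_not, hafter]
  split_ifs <;> push_cast <;> omega

lemma card_desXY_insertNth_eq_of_mem (hX : n + 1 ∈ X) (σ : Equiv.Perm (Fin n)) (s : ℤ) :
    (#{p | (desXY X Y (Fin.insertNth p (n + 1) (permWord σ)) : ℤ) = s} : ℤ) =
      (if (desXY X Y (permWord σ) : ℤ) = s then 1 + (complCount Y n : ℤ) + s else 0) +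
        (if (desXY X Y (permWord σ) : ℤ) = s - 1 then (n : ℤ) - complCount Y n - s + 1
          else 0) := by
  set afterDescent : Fin (n + 1) → Prop :=
    fun p => ∃ i, i.succ = p ∧ IsXYDescentAt X Y (permWord σ) i
  set beforeY : Fin (n + 1) → Prop := fun p => ∃ k, k.castSucc = p ∧ permWord σ k ∈ Y
  have hafter : #{p | afterDescent p} = desXY X Y (permWord σ) := by
    rw [desXY_eq_card, ← card_filter_exists_eq_and (Fin.succEmb n)]
    rfl
  have hbefore : #{p | beforeY p} + complCount Y n = n := by
    have := card_filter_permWord_mem_add_complCount (Y := Y) σ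
    rwa [← card_filter_exists_eq_and Fin.castSuccEmb] at this
  have hsplit :
      #{p | beforeY p ∧ ¬afterDescent p} + #{p | afterDescent p} = #{p | beforeY p} := by
    rw [← card_filter_add_card_filter_not (s := {p | beforeY p}) afterDescent, filter_filter,
      filter_filter, add_comm]
    congr 3
    ext p
    refine ⟨fun hp => ⟨?_, hp⟩, And.right⟩
    obtain ⟨i, rfl, hi⟩ := hp
    exact hi.exists_castSucc_eq_succ
  have hcompl := card_filter_add_card_filter_not (s := univ) fun p => beforeY p ∧ ¬afterDescent p
  rw [card_univ, Fintype.card_fin] at hcompl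
  have hdes (p : Fin (n + 1)) : (desXY X Y (Fin.insertNth p (n + 1) (permWord σ)) : ℤ) =
      desXY X Y (permWord σ) + if beforeY p ∧ ¬afterDescent p then 1 else 0 := by
    rw [desXY_insertNth_of_mem (permWord_lt σ) hX p]
    push_cast
    rfl
  rw [card_filter_eq_of_eq_add_ite _ hdes]
  split_ifs <;> push_cast <;> omega

lemma desCount_succ_of_notMem (hX : n + 1 ∉ X) (s : ℤ) :
    (desCount X Y (n + 1) s : ℤ) =
      (s + 1) * desCount X Y n (s + 1) + ((n : ℤ) + 1 - s) * desCount X Y n s := by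
  rw [desCount_succ_eq_sum]
  push_cast
  simp only [card_desXY_insertNth_eq_of_notMem hX, sum_add_distrib, sum_ite, sum_const,
    nsmul_eq_mul, desCount]
  ring

lemma desCount_succ_of_mem (hX : n + 1 ∈ X) (s : ℤ) :
    (desCount X Y (n + 1) s : ℤ) =
      (1 + (complCount Y n : ℤ) + s) * desCount X Y n s +
        ((n : ℤ) - complCount Y n - s + 1) * desCount X Y n (s - 1) := by
  rw [desCount_succ_eq_sum]
  push_cast
  simp only [card_desXY_insertNth_eq_of_mem hX, sum_add_distrib, sum_ite, sum_const,
    nsmul_eq_mul, desCount]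
  ring

end Insertion

lemma complCount_succ (Y : Set ℕ) (n : ℕ) :
    complCount Y (n + 1) = complCount Y n + if n + 1 ∈ Y then 0 else 1 := by
  rw [complCount, complCount, ← Finset.insert_Icc_right_eq_Icc_add_one (by omega), filter_insert]
  split_ifs with h
  · rfl
  · rw [card_insert_of_notMem (by simp)]

lemma permCountT_eq_ite (X Y : Set ℕ) (n : ℕ) (s t : ℤ) :
    permCountT X Y n s t = if t = complCount Y n then desCount X Y n s else 0 := by
  unfold permCountT desCount complCount
  split_ifs with ht
  · simp only [ht, and_true]
    rfl
  · simp [ht]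

theorem stmt4 (X Y : Set ℕ) (n s t : ℕ) :
    ((n + 1) ∉ X → (n + 1) ∉ Y →
      (permCountT X Y (n + 1) s t : ℤ) =
        ((s : ℤ) + 1) * permCountT X Y n ((s : ℤ) + 1) ((t : ℤ) - 1) +
          ((n : ℤ) + 1 - s) * permCountT X Y n s ((t : ℤ) - 1)) ∧
    ((n + 1) ∉ X → (n + 1) ∈ Y →
      (permCountT X Y (n + 1) s t : ℤ) =
        ((s : ℤ) + 1) * permCountT X Y n ((s : ℤ) + 1) t +
          ((n : ℤ) + 1 - s) * permCountT X Y n s t) ∧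
    ((n + 1) ∈ X → (n + 1) ∉ Y →
      (permCountT X Y (n + 1) s t : ℤ) =
        ((s : ℤ) + t) * permCountT X Y n s ((t : ℤ) - 1) +
          ((n : ℤ) + 2 - s - t) * permCountT X Y n ((s : ℤ) - 1) ((t : ℤ) - 1)) ∧
    ((n + 1) ∈ X → (n + 1) ∈ Y →
      (permCountT X Y (n + 1) s t : ℤ) =
        ((s : ℤ) + t + 1) * permCountT X Y n s t +
          ((n : ℤ) + 1 - s - t) * permCountT X Y n ((s : ℤ) - 1) t) := by
  simp only [permCountT_eq_ite, complCount_succ]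
  refine ⟨fun hX hY => ?_, fun hX hY => ?_, fun hX hY => ?_, fun hX hY => ?_⟩ <;>
    simp only [hY, if_true, if_false, add_zero, Nat.cast_add, Nat.cast_one] <;>
    split_ifs with h₁ <;> (try omega)
  -- `omega` has closed the branches where the `t`-conditions disagree and both sides vanish
  · exact desCount_succ_of_notMem hX _
  · exact desCount_succ_of_notMem hX _
  · rw [desCount_succ_of_mem hX, h₁]
    ring
  · rw [desCount_succ_of_mem hX, h₁]
    ring
end

section
/- Let X ⊆ ℕ, n ≥ 1, and let X* = {i ∈ {1,…,n} : n+1-i ∈ X ∩ {1,…,n}}. Then for every s ≥ 0, the number Q_{n,s}^{X} of permutations σ of {1,…,n} with exactly s descents whose bottom lies in X equals P_{n,s}^{X*}, the number of permutations of {1,…,n} with exactly s descents whose top lies in X*. -/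
open scoped Classical
open Finset

/-- Key lemma: the reverse–complement map `σ ↦ rev ∘ σ ∘ rev` turns descents
with bottom in `X` into descents with top in `X*`. -/
lemma aux_des (X : Set ℕ) {n : ℕ} (σ : Equiv.Perm (Fin n)) :
    desXY Set.univ X (fun i => (σ i : ℕ) + 1) =
      desXY {i : ℕ | 1 ≤ i ∧ i ≤ n ∧ (n + 1 - i) ∈ X ∩ Set.Icc 1 n} Set.univ
        (fun i => ((Fin.revPerm.trans (σ.trans Fin.revPerm)) i : ℕ) + 1) := by
  unfold desXY
  rcases Nat.eq_zero_or_pos n with h0 | hn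
  · subst h0; rfl
  refine Finset.card_bij' (fun (a : Fin n) _ => (⟨n - 2 - a.1, by omega⟩ : Fin n))
    (fun (a : Fin n) _ => (⟨n - 2 - a.1, by omega⟩ : Fin n)) ?_ ?_ ?_ ?_
  · intro a ha
    simp only [Finset.mem_filter, Finset.mem_univ, true_and] at ha ⊢
    obtain ⟨h, hgt, -, hX⟩ := ha
    have h' : n - 2 - a.1 + 1 < n := by omega
    have e1 : Fin.rev (⟨n - 2 - a.1, by omega⟩ : Fin n) = ⟨a.1 + 1, h⟩ := by
      ext; simp [Fin.val_rev]; omega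
    have e2 : Fin.rev (⟨n - 2 - a.1 + 1, h'⟩ : Fin n) = a := by
      ext; simp [Fin.val_rev]; omega
    refine ⟨h', ?_, ?_, trivial⟩
    · simp only [Equiv.trans_apply, Fin.revPerm_apply, e1, e2, Fin.val_rev]
      have := (σ ⟨a.1 + 1, h⟩).isLt
      have := (σ a).isLt
      omega
    · simp only [Equiv.trans_apply, Fin.revPerm_apply, e1, Fin.val_rev, Set.mem_setOf_eq]
      have hlt := (σ ⟨a.1 + 1, h⟩).isLt
      refine ⟨by omega, by omega, ?_, by omega, by omega⟩
      have heq : n + 1 - (n - ((σ ⟨a.1 + 1, h⟩ : ℕ) + 1) + 1) = (σ ⟨a.1 + 1, h⟩ : ℕ) + 1 := by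
        omega
      rw [heq]; exact hX
  · intro a ha
    simp only [Finset.mem_filter, Finset.mem_univ, true_and] at ha ⊢
    obtain ⟨h, hgt, hX, -⟩ := ha
    have h' : n - 2 - a.1 + 1 < n := by omega
    have e1 : Fin.rev a = ⟨n - 2 - a.1 + 1, h'⟩ := by
      ext; simp [Fin.val_rev]; omega
    have e2 : Fin.rev (⟨a.1 + 1, h⟩ : Fin n) = ⟨n - 2 - a.1, by omega⟩ := by
      ext; simp [Fin.val_rev]; omega
    simp only [Equiv.trans_apply, Fin.revPerm_apply, e1, e2, Fin.val_rev,
      Set.mem_setOf_eq, Set.mem_inter_iff, Set.mem_Icc] at hgt hX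
    have l1 := (σ (⟨n - 2 - a.1, by omega⟩ : Fin n)).isLt
    have l2 := (σ (⟨n - 2 - a.1 + 1, h'⟩ : Fin n)).isLt
    refine ⟨h', by omega, trivial, ?_⟩
    obtain ⟨h1, h2, h3, -⟩ := hX
    have heq : n + 1 - (n - ((σ (⟨n - 2 - a.1 + 1, h'⟩ : Fin n) : ℕ) + 1) + 1)
        = (σ (⟨n - 2 - a.1 + 1, h'⟩ : Fin n) : ℕ) + 1 := by omega
    rw [heq] at h3
    exact h3
  · intro a ha
    simp only [Finset.mem_filter, Finset.mem_univ, true_and] at ha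
    obtain ⟨h, -⟩ := ha
    ext; simp; omega
  · intro a ha
    simp only [Finset.mem_filter, Finset.mem_univ, true_and] at ha
    obtain ⟨h, -⟩ := ha
    ext; simp; omega

theorem stmt5 (X : Set ℕ) (n : ℕ) (hn : 1 ≤ n) (s : ℕ) :
    permCount Set.univ X n s =
      permCount {i : ℕ | 1 ≤ i ∧ i ≤ n ∧ (n + 1 - i) ∈ X ∩ Set.Icc 1 n} Set.univ n s := by
  unfold permCount
  refine Finset.card_bij'
    (fun σ _ => Fin.revPerm.trans (σ.trans Fin.revPerm))
    (fun σ _ => Fin.revPerm.trans (σ.trans Fin.revPerm)) ?_ ?_ ?_ ?_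
  · intro σ hσ
    simp only [Finset.mem_filter, Finset.mem_univ, true_and] at hσ ⊢
    rw [← hσ]; exact (aux_des X σ).symm
  · intro σ hσ
    simp only [Finset.mem_filter, Finset.mem_univ, true_and] at hσ ⊢
    rw [← hσ, aux_des X (Fin.revPerm.trans (σ.trans Fin.revPerm))]
    congr 1
    ext x
    simp
  · intro σ _
    ext x; simp
  · intro σ _
    ext x; simp
end

section
/- Let u = (u_1,…,u_k) be a weakly increasing array of non-negative integers and v = (v_1,…,v_k) an array of positive integers, let n ≥ Σ_{i=1}^{k} v_i + max{u_i+v_i : 1 ≤ i ≤ k} - u_1, let a = n - Σ_{i=1}^{k} v_i, and let s ≥ 0. Then, as integers, a! · Σ_{r=0}^{s} (-1)^{s-r} · C(a+r, r) · C(n+1, s-r) · Π_{i=1}^{k} (u_i+1+r)_{v_i} = a! · Σ_{r=0}^{n-a-s} (-1)^{n-a-s-r} · C(a+r, r) · C(n+1, n-a-s-r) · Π_{i=1}^{k} (a+1-u_i-v_i+r)_{v_i}, where (x)_j for integer x (possibly negative) denotes the product x(x+1)⋯(x+j-1). (Both sides equal P_{n,s}^{X} for the set X determined by u and v, and the identity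 is equivalent to a balanced case of Gasper's transformation.) -/
/-!
Write `m = ∑ vᵢ`, so `n = a + m`, and let `P r = ∏ᵢ (uᵢ + 1 + r)_{vᵢ}`, a polynomial of degree `m`;
the right-hand side is the left-hand side for the polynomial `r ↦ (-1)^m P(-r-a-1)` with `s`
replaced by `m - s`. Both sides are linear in `P`, so it suffices to take `P` a falling factorial
`r^(i)`, `i ≤ m`. The left-hand side is the coefficient of `t^s` in
`(1 - t)^(a+m+1) ∑ C(a+r, r) P(r) tʳ`. Since `C(a+r, r) r^(i) = i! C(a+i, i) C(a+r, a+i)` this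
product is `i! C(a+i, i) tⁱ (1-t)^(m-i)`, and for the reflected polynomial it is
`(-1)^(m+i) i! C(a+i, i) (1-t)^(m-i)`: the two are reverses of each other as polynomials of
degree `m`.
-/

open Finset Polynomial

theorem PowerSeries.coeff_one_sub_X_pow_s12 {R : Type*} [CommRing R] (D j : ℕ) :
    coeff j ((1 - X : PowerSeries R) ^ D) = (-1) ^ j * D.choose j := by
  have : (1 - X : PowerSeries R) ^ D =
      rescale (-1) (((1 + Polynomial.X : R[X]) ^ D : R[X]) : PowerSeries R) := by
    simp [sub_eq_add_neg]
  rw [this, coeff_rescale, Polynomial.coeff_coe, coeff_one_add_X_pow]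

theorem PowerSeries.mk_choose_mul_one_sub_X_pow (c i D : ℕ) :
    (mk fun r => ((c + r).choose (c + i) : ℤ)) * (1 - X) ^ (c + i + 1 + D) =
      X ^ i * (1 - X) ^ D := by
  have hshift : (mk fun r => ((c + r).choose (c + i) : ℤ)) =
      X ^ i * mk fun t => ((c + i + t).choose (c + i) : ℤ) := by
    ext r
    rw [coeff_X_pow_mul', coeff_mk]
    split_ifs with hir
    · rw [coeff_mk, show c + i + (r - i) = c + r by omega]
    · simp [Nat.choose_eq_zero_of_lt (by omega : c + r < c + i)]
  rw [hshift, pow_add, ← mul_assoc, mul_assoc (X ^ i), mk_add_choose_mul_one_sub_pow_eq_one,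
    mul_one]

theorem Nat.add_choose_mul_choose (a r i : ℕ) :
    (a + r).choose r * r.choose i = (a + i).choose i * (a + r).choose (a + i) := by
  rcases lt_or_ge r i with hri | hir
  · simp [Nat.choose_eq_zero_of_lt hri, Nat.choose_eq_zero_of_lt (by omega : a + r < a + i)]
  rw [Nat.choose_mul hir, mul_comm ((a + i).choose i), Nat.choose_mul (by omega : i ≤ a + i),
    Nat.choose_symm_of_eq_add (by omega : a + r - i = (r - i) + a)]
  congr 2
  omega

theorem Nat.add_choose_mul_add_choose (a r i : ℕ) :
    (a + r).choose r * (a + r + i).choose i = (a + i).choose i * (a + i + r).choose (a + i) := by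
  have h := Nat.choose_mul (n := a + r + i) (k := a + r) (s := r) (by omega)
  rw [Nat.choose_symm_add, show a + r + i - r = a + i by omega, show a + r - r = a by omega] at h
  rw [mul_comm, h, mul_comm, Nat.choose_symm_add, Nat.choose_symm_add,
    show a + i + r = a + r + i by omega]

theorem ascPochhammer_eval_eq_prod_range {R : Type*} [CommSemiring R] (n : ℕ) (x : R) :
    (ascPochhammer R n).eval x = ∏ j ∈ range n, (x + j) := by
  induction n with
  | zero => simp
  | succ n ih => simp [ascPochhammer_succ_right, ih, prod_range_succ]

theorem neg_one_pow_mul_ascPochhammer_eval_neg {R : Type*} [Ring R] (n : ℕ) (y : R) :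
    (-1) ^ n * (ascPochhammer R n).eval (-y) = (ascPochhammer R n).eval (y - n + 1) := by
  rw [ascPochhammer_eval_neg_eq_descPochhammer, ← mul_assoc, ← pow_add,
    Even.neg_one_pow ⟨n, rfl⟩, one_mul, descPochhammer_eval_eq_ascPochhammer]

theorem descPochhammer_eval_natCast_eq_factorial_mul_choose {R : Type*} [Ring R] (i r : ℕ) :
    (descPochhammer R i).eval (r : R) = (i.factorial * r.choose i : ℕ) := by
  rw [descPochhammer_eval_eq_descFactorial, Nat.descFactorial_eq_factorial_mul_choose]

theorem descPochhammer_eval_neg_natCast_succ {R : Type*} [Ring R] (i r : ℕ) :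
    (descPochhammer R i).eval (-(r + 1 : ℕ) : R) =
      (-1) ^ i * (i.factorial * (r + i).choose i : ℕ) := by
  have h := ascPochhammer_eval_neg_eq_descPochhammer (R := R) (-(r + 1 : ℕ)) i
  rw [neg_neg, ascPochhammer_nat_eq_natCast_ascFactorial,
    Nat.ascFactorial_eq_factorial_mul_choose] at h
  rw [h, ← mul_assoc, ← pow_add, Even.neg_one_pow ⟨i, rfl⟩, one_mul]

noncomputable def descPochhammerSequence (R : Type*) [Ring R] [Nontrivial R] [NoZeroDivisors R] :
    Polynomial.Sequence R where
  elems' := descPochhammer R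
  degree_eq' i := by
    rw [degree_eq_natDegree (monic_descPochhammer R i).ne_zero, descPochhammer_natDegree]

theorem mem_span_descPochhammer {R : Type*} [Ring R] [Nontrivial R] [NoZeroDivisors R]
    {P : R[X]} {m : ℕ} (hP : P.natDegree ≤ m) :
    P ∈ Submodule.span R (descPochhammer R '' Set.Iic m) := by
  have := (descPochhammerSequence R).span_degreeLE (m := m)
    fun i _ => by simp [descPochhammerSequence, (monic_descPochhammer R i).leadingCoeff]
  exact this ▸ mem_degreeLE.mpr (natDegree_le_iff_degree_le.mp hP)

theorem natDegree_prod_ascPochhammer_comp {ι R : Type*} [Fintype ι] [CommRing R] [IsDomain R]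
    (v : ι → ℕ) (c : ι → R) :
    (∏ i, (ascPochhammer R (v i)).comp (X + C (c i))).natDegree ≤ ∑ i, v i :=
  (natDegree_prod_le _ _).trans <| le_of_eq <| sum_congr rfl fun i _ => by
    rw [natDegree_comp, ascPochhammer_natDegree, natDegree_X_add_C, mul_one]

theorem eval_prod_ascPochhammer_comp {ι R : Type*} [Fintype ι] [CommRing R]
    (v : ι → ℕ) (c : ι → R) (x : R) :
    (∏ i, (ascPochhammer R (v i)).comp (X + C (c i))).eval x =
      ∏ i, ∏ j ∈ range (v i), (c i + x + j) := by
  simp only [eval_prod, eval_comp, eval_add, eval_X, eval_C, ascPochhammer_eval_eq_prod_range,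
    add_comm x]

theorem neg_one_pow_sum_mul_eval_neg_prod_ascPochhammer_comp {ι R : Type*} [Fintype ι]
    [CommRing R] (v : ι → ℕ) (c : ι → R) (y : R) :
    (-1) ^ (∑ i, v i) * (∏ i, (ascPochhammer R (v i)).comp (X + C (c i))).eval (-y) =
      ∏ i, ∏ j ∈ range (v i), (y - c i - v i + 1 + j) := by
  rw [← prod_pow_eq_pow_sum, eval_prod, ← prod_mul_distrib]
  refine prod_congr rfl fun i _ => ?_
  rw [eval_comp, eval_add, eval_X, eval_C, show -y + c i = -(y - c i) by ring,
    neg_one_pow_mul_ascPochhammer_eval_neg, ascPochhammer_eval_eq_prod_range]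

def alternatingConvolution (N : ℕ) (f : ℕ → ℤ) (s : ℕ) : ℤ :=
  ∑ r ∈ range (s + 1), (-1) ^ (s - r) * (N.choose (s - r) : ℤ) * f r

theorem alternatingConvolution_eq_coeff (N : ℕ) (f : ℕ → ℤ) (s : ℕ) :
    alternatingConvolution N f s =
      PowerSeries.coeff s (PowerSeries.mk f * (1 - PowerSeries.X) ^ N) := by
  rw [PowerSeries.coeff_mul, Finset.Nat.sum_antidiagonal_eq_sum_range_succ
    (fun p q => PowerSeries.coeff p (PowerSeries.mk f) * PowerSeries.coeff q _)]
  refine sum_congr rfl fun r _ => ?_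
  rw [PowerSeries.coeff_mk, PowerSeries.coeff_one_sub_X_pow_s12, mul_comm]

theorem alternatingConvolution_const_mul (N : ℕ) (c : ℤ) (f : ℕ → ℤ) (s : ℕ) :
    alternatingConvolution N (fun r => c * f r) s = c * alternatingConvolution N f s := by
  rw [alternatingConvolution, alternatingConvolution, mul_sum]
  exact sum_congr rfl fun _ _ => by ring

theorem alternatingConvolution_choose (c i D s : ℕ) :
    alternatingConvolution (c + i + 1 + D) (fun r => (c + r).choose (c + i)) s =
      if i ≤ s then (-1) ^ (s - i) * (D.choose (s - i) : ℤ) else 0 := by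
  rw [alternatingConvolution_eq_coeff, PowerSeries.mk_choose_mul_one_sub_X_pow,
    PowerSeries.coeff_X_pow_mul', PowerSeries.coeff_one_sub_X_pow_s12]

def weightedConvolution (N a s : ℕ) (x : ℕ → ℤ) : ℤ[X] →ₗ[ℤ] ℤ where
  toFun P := alternatingConvolution N (fun r => (a + r).choose r * P.eval (x r)) s
  map_add' P Q := by
    simp only [alternatingConvolution, eval_add, mul_add, sum_add_distrib]
  map_smul' c P := by
    simp only [alternatingConvolution, eval_smul, smul_eq_mul, RingHom.id_apply, mul_sum]
    exact sum_congr rfl fun _ _ => by ring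

theorem weightedConvolution_apply (N a s : ℕ) (x : ℕ → ℤ) (P : ℤ[X]) :
    weightedConvolution N a s x P =
      alternatingConvolution N (fun r => (a + r).choose r * P.eval (x r)) s := rfl

theorem weightedConvolution_descPochhammer_natCast (a i D s : ℕ) :
    weightedConvolution (a + i + 1 + D) a s (↑) (descPochhammer ℤ i) =
      i.factorial * (a + i).choose i *
        if i ≤ s then (-1) ^ (s - i) * (D.choose (s - i) : ℤ) else 0 := by
  have h (r : ℕ) : ((a + r).choose r : ℤ) * (descPochhammer ℤ i).eval (r : ℤ) =
      i.factorial * (a + i).choose i * (a + r).choose (a + i) := by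
    rw [descPochhammer_eval_natCast_eq_factorial_mul_choose]
    exact_mod_cast by rw [mul_left_comm, Nat.add_choose_mul_choose, mul_assoc]
  simp only [weightedConvolution_apply, h, alternatingConvolution_const_mul,
    alternatingConvolution_choose]

theorem weightedConvolution_descPochhammer_neg (a i D s : ℕ) :
    weightedConvolution (a + i + 1 + D) a s (fun r => -((r + a + 1 : ℕ) : ℤ))
        (descPochhammer ℤ i) =
      (-1) ^ i * i.factorial * (a + i).choose i * ((-1) ^ s * (D.choose s : ℤ)) := by
  have h (r : ℕ) : ((a + r).choose r : ℤ) * (descPochhammer ℤ i).eval (-((r + a + 1 : ℕ) : ℤ)) =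
      (-1) ^ i * i.factorial * (a + i).choose i * (a + i + r).choose (a + i) := by
    have key : ((a + r).choose r * (a + r + i).choose i : ℤ) =
        (a + i).choose i * (a + i + r).choose (a + i) := by
      exact_mod_cast Nat.add_choose_mul_add_choose a r i
    rw [descPochhammer_eval_neg_natCast_succ, add_comm r a]
    push_cast
    linear_combination (-1) ^ i * (i.factorial : ℤ) * key
  have hconv := alternatingConvolution_choose (a + i) 0 D s
  simp only [add_zero, Nat.sub_zero, zero_le, if_true] at hconv
  simp only [weightedConvolution_apply, h, alternatingConvolution_const_mul, hconv]

theorem weightedConvolution_reflect {a m s : ℕ} (hs : s ≤ m) {P : ℤ[X]} (hP : P.natDegree ≤ m) :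
    weightedConvolution (a + m + 1) a s (↑) P =
      (-1) ^ m * weightedConvolution (a + m + 1) a (m - s) (fun r => -((r + a + 1 : ℕ) : ℤ)) P := by
  change _ = ((-1) ^ m • weightedConvolution _ _ _ _) P
  refine LinearMap.eqOn_span' ?_ (mem_span_descPochhammer hP)
  rintro _ ⟨i, hi, rfl⟩
  obtain ⟨D, rfl⟩ := Nat.exists_eq_add_of_le (Set.mem_Iic.mp hi)
  rw [LinearMap.smul_apply, smul_eq_mul, show a + (i + D) + 1 = a + i + 1 + D by ring,
    weightedConvolution_descPochhammer_natCast, weightedConvolution_descPochhammer_neg]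
  split_ifs with his
  · obtain ⟨e, rfl⟩ := Nat.exists_eq_add_of_le his
    obtain ⟨f, rfl⟩ := Nat.exists_eq_add_of_le (show e ≤ D by omega)
    have hsign : (-1 : ℤ) ^ (i + (e + f)) * (-1) ^ i * (-1) ^ f = (-1) ^ e := by
      rw [← pow_add, ← pow_add, show i + (e + f) + i + f = e + 2 * (i + f) by ring, pow_add,
        pow_mul]
      simp
    rw [show i + (e + f) - (i + e) = f by omega, Nat.add_sub_cancel_left, Nat.choose_symm_add]
    linear_combination (i.factorial * (a + i).choose i * (e + f).choose f : ℤ) * hsign.symm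
  · rw [Nat.choose_eq_zero_of_lt (by omega : D < i + D - s)]
    simp

theorem weightedConvolution_eq_zero {a m s : ℕ} (hs : m < s) {P : ℤ[X]} (hP : P.natDegree ≤ m) :
    weightedConvolution (a + m + 1) a s (↑) P = 0 := by
  change _ = (0 : ℤ[X] →ₗ[ℤ] ℤ) P
  refine LinearMap.eqOn_span' ?_ (mem_span_descPochhammer hP)
  rintro _ ⟨i, hi, rfl⟩
  obtain ⟨D, rfl⟩ := Nat.exists_eq_add_of_le (Set.mem_Iic.mp hi)
  rw [show a + (i + D) + 1 = a + i + 1 + D by ring, weightedConvolution_descPochhammer_natCast,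
    Nat.choose_eq_zero_of_lt (by omega : D < s - i)]
  simp

theorem sum_choose_mul_eval_reflect (a m s : ℕ) {P : ℤ[X]} (hP : P.natDegree ≤ m) :
    ∑ r ∈ range (s + 1), (-1) ^ (s - r) * ((a + r).choose r : ℤ) *
        ((a + m + 1).choose (s - r) : ℤ) * P.eval (r : ℤ) =
      ∑ r ∈ range (m + 1 - s), (-1) ^ (m - s - r) * ((a + r).choose r : ℤ) *
        ((a + m + 1).choose (m - s - r) : ℤ) * ((-1) ^ m * P.eval (-((r + a + 1 : ℕ) : ℤ))) := by
  rcases le_or_gt s m with hs | hs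
  · have h := weightedConvolution_reflect (a := a) hs hP
    rw [weightedConvolution_apply, weightedConvolution_apply, alternatingConvolution,
      alternatingConvolution, mul_sum, show m - s + 1 = m + 1 - s by omega] at h
    exact (sum_congr rfl fun r _ => by ring).trans (h.trans (sum_congr rfl fun r _ => by ring))
  · have h := weightedConvolution_eq_zero (a := a) hs hP
    rw [weightedConvolution_apply, alternatingConvolution] at h
    rw [show m + 1 - s = 0 by omega, sum_range_zero, ← h]
    exact sum_congr rfl fun r _ => by ring

theorem stmt12_general (k : ℕ) (hk : 0 < k) (u v : Fin k → ℕ) (n s a : ℕ)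
    (hn : (∑ i, v i) + (Finset.univ.sup (fun i => u i + v i) - u ⟨0, hk⟩) ≤ n)
    (ha : a = n - ∑ i, v i) :
    (Nat.factorial a : ℤ) *
        ∑ r ∈ Finset.range (s + 1),
          (-1) ^ (s - r) * (Nat.choose (a + r) r : ℤ) * (Nat.choose (n + 1) (s - r) : ℤ) *
            ∏ i, ∏ j ∈ Finset.range (v i), ((u i : ℤ) + 1 + (r : ℤ) + (j : ℤ)) =
      (Nat.factorial a : ℤ) *
        ∑ r ∈ Finset.range (n + 1 - a - s),
          (-1) ^ (n - a - s - r) * (Nat.choose (a + r) r : ℤ) *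
            (Nat.choose (n + 1) (n - a - s - r) : ℤ) *
            ∏ i, ∏ j ∈ Finset.range (v i),
              ((a : ℤ) + 1 - (u i : ℤ) - (v i : ℤ) + (r : ℤ) + (j : ℤ)) := by
  set m := ∑ i, v i
  obtain rfl : n = a + m := by have := (Nat.le_add_right m _).trans hn; omega
  let c : Fin k → ℤ := fun i => u i + 1
  have hL (r : ℕ) := eval_prod_ascPochhammer_comp v c r
  have hR (r : ℕ) := neg_one_pow_sum_mul_eval_neg_prod_ascPochhammer_comp v c (r + a + 1 : ℕ)
  rw [show a + m + 1 - a - s = m + 1 - s by omega, show a + m - a - s = m - s by omega]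
  congr 1
  convert sum_choose_mul_eval_reflect a m s (natDegree_prod_ascPochhammer_comp v c) using 3
    with r _ r _
  · rw [hL]
  · rw [hR]
    exact prod_congr rfl fun i _ => prod_congr rfl fun j _ => by push_cast; ring

theorem stmt12 (k : ℕ) (hk : 0 < k) (u v : Fin k → ℕ) (hu : Monotone u)
    (hv : ∀ i, 0 < v i) (n s a : ℕ)
    (hn : (∑ i, v i) + (Finset.univ.sup (fun i => u i + v i) - u ⟨0, hk⟩) ≤ n)
    (ha : a = n - ∑ i, v i) :
    (Nat.factorial a : ℤ) *
        ∑ r ∈ Finset.range (s + 1),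
          (-1) ^ (s - r) * (Nat.choose (a + r) r : ℤ) * (Nat.choose (n + 1) (s - r) : ℤ) *
            ∏ i, ∏ j ∈ Finset.range (v i), ((u i : ℤ) + 1 + (r : ℤ) + (j : ℤ)) =
      (Nat.factorial a : ℤ) *
        ∑ r ∈ Finset.range (n + 1 - a - s),
          (-1) ^ (n - a - s - r) * (Nat.choose (a + r) r : ℤ) *
            (Nat.choose (n + 1) (n - a - s - r) : ℤ) *
            ∏ i, ∏ j ∈ Finset.range (v i),
              ((a : ℤ) + 1 - (u i : ℤ) - (v i : ℤ) + (r : ℤ) + (j : ℤ)) :=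
  stmt12_general k hk u v n s a hn ha
end

section
/- Let a, b ≥ 1, let ρ = (a, b), and let X = {2}. Then for all s ≥ 0, the number of rearrangements of the word 1^a 2^b with exactly s descents whose top equals 2 is C(a,s) · C(b,s). -/
open scoped Classical
open Finset

/-- `wordCount X Y n m ρ s` is the number of words `w` of length `n` over the
alphabet `{1,…,m}` with exactly `ρ j` occurrences of each letter `j ∈ {1,…,m}`
(i.e. words in the rearrangement class `R(ρ)` of `1^{ρ_1} ⋯ m^{ρ_m}`) having
exactly `s` `X,Y`-descents. -/
noncomputable def wordCount (X Y : Set ℕ) (n m : ℕ) (ρ : ℕ → ℕ) (s : ℕ) : ℕ :=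
  Set.ncard {w : Fin n → ℕ |
    (∀ i, 1 ≤ w i ∧ w i ≤ m) ∧
    (∀ j, 1 ≤ j → j ≤ m → (Finset.univ.filter (fun i => w i = j)).card = ρ j) ∧
    desXY X Y w = s}

namespace Stmt17

noncomputable def cnt {n : ℕ} (j : ℕ) (w : Fin n → ℕ) : ℕ :=
  (Finset.univ.filter (fun i => w i = j)).card

noncomputable def des {n : ℕ} (w : Fin n → ℕ) : ℕ := desXY {2} Set.univ w

def ext {m : ℕ} (v : Fin m → ℕ) (c : ℕ) : Fin (m + 1) → ℕ :=
  fun i => if h : i.1 < m then v ⟨i.1, h⟩ else c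

def itr {m : ℕ} (w : Fin (m + 1) → ℕ) : Fin m → ℕ := fun j => w j.castSucc

lemma ext_castSucc {m : ℕ} (v : Fin m → ℕ) (c : ℕ) (i : Fin m) :
    ext v c i.castSucc = v i := dif_pos i.2

lemma ext_last {m : ℕ} (v : Fin m → ℕ) (c : ℕ) : ext v c (Fin.last m) = c :=
  dif_neg (lt_irrefl m)

lemma itr_ext {m : ℕ} (v : Fin m → ℕ) (c : ℕ) : itr (ext v c) = v := by
  funext j; exact ext_castSucc v c j

lemma ext_itr {m : ℕ} (w : Fin (m + 1) → ℕ) : ext (itr w) (w (Fin.last m)) = w := by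
  funext i
  by_cases h : i.1 < m
  · have hi : i = Fin.castSucc ⟨i.1, h⟩ := Fin.ext rfl
    rw [hi, ext_castSucc]; rfl
  · have hi : i = Fin.last m := Fin.ext (by have := i.2; simp [Fin.last]; omega)
    rw [hi, ext_last]

lemma cnt_ext {m : ℕ} (v : Fin m → ℕ) (c j : ℕ) :
    cnt j (ext v c) = cnt j v + if c = j then 1 else 0 := by
  unfold cnt
  rw [Finset.card_filter, Finset.card_filter, Fin.sum_univ_castSucc]
  simp [ext_castSucc, ext_last]

lemma des_card {n : ℕ} (w : Fin n → ℕ) :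
    des w = (univ.filter (fun i : Fin n =>
      ∃ h : i.1 + 1 < n, w i = 2 ∧ w ⟨i.1 + 1, h⟩ < w i)).card := by
  unfold des desXY
  congr 1
  ext i
  simp only [mem_filter, mem_univ, true_and, Set.mem_singleton_iff, Set.mem_univ,
    and_true, gt_iff_lt]
  constructor
  · rintro ⟨h, h1, h2⟩; exact ⟨h, h2, h1⟩
  · rintro ⟨h, h1, h2⟩; exact ⟨h, h2, h1⟩

lemma des_one (w : Fin 1 → ℕ) : des w = 0 := by
  rw [des_card]
  apply Finset.card_eq_zero.mpr
  rw [Finset.filter_eq_empty_iff]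
  rintro i - ⟨h, -⟩
  omega

lemma des_ext {m : ℕ} (v : Fin (m + 1) → ℕ) (c : ℕ) :
    des (ext v c) = des v + if v (Fin.last m) = 2 ∧ c < 2 then 1 else 0 := by
  rw [des_card, des_card, Finset.card_filter, Finset.card_filter]
  simp only [Fin.sum_univ_castSucc]
  have hlast2 : (if ∃ h : (Fin.last (m+1)).1 + 1 < m + 2,
      ext v c (Fin.last (m+1)) = 2 ∧ ext v c ⟨(Fin.last (m+1)).1 + 1, h⟩ < ext v c (Fin.last (m+1))
      then 1 else 0) = 0 := by
    rw [if_neg]; rintro ⟨h, -⟩; simp [Fin.last] at h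
  have hlast1 : (if ∃ h : (Fin.last m).1 + 1 < m + 1,
      v (Fin.last m) = 2 ∧ v ⟨(Fin.last m).1 + 1, h⟩ < v (Fin.last m)
      then 1 else 0) = 0 := by
    rw [if_neg]; rintro ⟨h, -⟩; simp [Fin.last] at h
  rw [hlast2, hlast1, add_zero, add_zero]
  congr 1
  · apply Finset.sum_congr rfl
    intro i _
    apply if_congr _ rfl rfl
    have e1 : ext v c (Fin.castSucc (Fin.castSucc i)) = v i.castSucc := ext_castSucc v c i.castSucc
    constructor
    · rintro ⟨h, h1, h2⟩
      have hlt : i.1 + 1 < m + 1 := by have := i.2; omega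
      refine ⟨hlt, ?_, ?_⟩
      · rwa [e1] at h1
      · have e2 : ext v c ⟨(Fin.castSucc (Fin.castSucc i)).1 + 1, h⟩ = v ⟨i.1 + 1, hlt⟩ :=
          dif_pos hlt
        rw [e1, e2] at h2; exact h2
    · rintro ⟨h, h1, h2⟩
      have hlt : (Fin.castSucc (Fin.castSucc i)).1 + 1 < m + 2 := by
        have := i.2; simp
      refine ⟨hlt, ?_, ?_⟩
      · rwa [e1]
      · have e2 : ext v c ⟨(Fin.castSucc (Fin.castSucc i)).1 + 1, hlt⟩ = v ⟨i.1 + 1, h⟩ :=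
          dif_pos h
        rw [e1, e2]; exact h2
  · -- extra term at castSucc (last m)
    have e1 : ext v c (Fin.castSucc (Fin.last m)) = v (Fin.last m) := ext_castSucc v c _
    apply if_congr _ rfl rfl
    constructor
    · rintro ⟨h, h1, h2⟩
      rw [e1] at h1 h2
      have e2 : ext v c ⟨(Fin.castSucc (Fin.last m)).1 + 1, h⟩ = c := by
        have : (⟨(Fin.castSucc (Fin.last m)).1 + 1, h⟩ : Fin (m+2)) = Fin.last (m+1) := by
          apply Fin.ext; simp [Fin.last]
        rw [this, ext_last]
      rw [e2] at h2
      exact ⟨h1, by omega⟩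
    · rintro ⟨h1, h2⟩
      have hlt : (Fin.castSucc (Fin.last m)).1 + 1 < m + 2 := by simp [Fin.last]
      refine ⟨hlt, ?_, ?_⟩
      · rwa [e1]
      · have e2 : ext v c ⟨(Fin.castSucc (Fin.last m)).1 + 1, hlt⟩ = c := by
          have : (⟨(Fin.castSucc (Fin.last m)).1 + 1, hlt⟩ : Fin (m+2)) = Fin.last (m+1) := by
            apply Fin.ext; simp [Fin.last]
          rw [this, ext_last]
        rw [e1, e2]; omega


def WSet (n a b s : ℕ) : Set (Fin n → ℕ) :=
  {w | (∀ i, w i = 1 ∨ w i = 2) ∧ cnt 1 w = a ∧ cnt 2 w = b ∧ des w = s}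

def HSet (m a b s c : ℕ) : Set (Fin (m + 1) → ℕ) :=
  {w | w ∈ WSet (m + 1) a b s ∧ w (Fin.last m) = c}

def TSet (m a b s c : ℕ) : Set (Fin (m + 1) → ℕ) :=
  {v | (∀ j, v j = 1 ∨ v j = 2) ∧
       cnt 1 v + (if c = 1 then 1 else 0) = a ∧
       cnt 2 v + (if c = 2 then 1 else 0) = b ∧
       des v + (if v (Fin.last m) = 2 ∧ c < 2 then 1 else 0) = s}

lemma wset_finite (n a b s : ℕ) : (WSet n a b s).Finite := by
  apply Set.Finite.subset (Set.Finite.pi (fun i : Fin n => Set.finite_Icc 1 2))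
  intro w hw
  intro i _
  rcases hw.1 i with h | h <;> simp [h]

lemma hset_finite (m a b s c : ℕ) : (HSet m a b s c).Finite :=
  (wset_finite (m+1) a b s).subset (fun _ h => h.1)

lemma ncard_itr {m : ℕ} (c : ℕ) (P : (Fin m → ℕ) → Prop) :
    Set.ncard {w : Fin (m + 1) → ℕ | P (itr w) ∧ w (Fin.last m) = c} =
      Set.ncard {v | P v} := by
  have himg : itr '' {w : Fin (m + 1) → ℕ | P (itr w) ∧ w (Fin.last m) = c} = {v | P v} := by
    ext v
    constructor
    · rintro ⟨w, ⟨hP, -⟩, rfl⟩; exact hP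
    · intro hv
      exact ⟨ext v c, ⟨by rwa [itr_ext], ext_last v c⟩, itr_ext v c⟩
  have hinj : Set.InjOn itr {w : Fin (m + 1) → ℕ | P (itr w) ∧ w (Fin.last m) = c} := by
    rintro w1 ⟨-, h1⟩ w2 ⟨-, h2⟩ h
    rw [← ext_itr w1, ← ext_itr w2, h1, h2, h]
  rw [← himg, Set.ncard_image_of_injOn hinj]

lemma valid_ext {m : ℕ} (v : Fin m → ℕ) (c : ℕ) :
    (∀ i, ext v c i = 1 ∨ ext v c i = 2) ↔
      ((∀ j, v j = 1 ∨ v j = 2) ∧ (c = 1 ∨ c = 2)) := by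
  constructor
  · intro h
    refine ⟨fun j => ?_, ?_⟩
    · have := h j.castSucc; rwa [ext_castSucc] at this
    · have := h (Fin.last m); rwa [ext_last] at this
  · rintro ⟨h1, h2⟩ i
    by_cases hi : i.1 < m
    · have : i = Fin.castSucc ⟨i.1, hi⟩ := Fin.ext rfl
      rw [this, ext_castSucc]; exact h1 _
    · have : i = Fin.last m := Fin.ext (by have := i.2; simp [Fin.last]; omega)
      rw [this, ext_last]; exact h2

lemma hset_eq_tset (m a b s c : ℕ) (hc : c = 1 ∨ c = 2) :
    HSet (m + 1) a b s c =
      {w : Fin (m + 2) → ℕ | itr w ∈ TSet m a b s c ∧ w (Fin.last (m + 1)) = c} := by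
  ext w
  simp only [HSet, WSet, TSet, Set.mem_setOf_eq]
  constructor
  · rintro ⟨⟨hv, h1, h2, hd⟩, hlast⟩
    have hw : w = ext (itr w) c := by rw [← hlast, ext_itr]
    rw [hw] at hv h1 h2 hd
    rw [cnt_ext] at h1 h2
    rw [des_ext] at hd
    rw [valid_ext] at hv
    exact ⟨⟨hv.1, h1, h2, hd⟩, hlast⟩
  · rintro ⟨⟨hv, h1, h2, hd⟩, hlast⟩
    have hw : w = ext (itr w) c := by rw [← hlast, ext_itr]
    refine ⟨⟨?_, ?_, ?_, ?_⟩, hlast⟩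
    · rw [hw, valid_ext]; exact ⟨hv, hc⟩
    · rw [hw, cnt_ext]; exact h1
    · rw [hw, cnt_ext]; exact h2
    · rw [hw, des_ext]; exact hd

lemma hset_ncard_tset (m a b s c : ℕ) (hc : c = 1 ∨ c = 2) :
    (HSet (m + 1) a b s c).ncard = (TSet m a b s c).ncard := by
  rw [hset_eq_tset m a b s c hc]
  exact ncard_itr c _

lemma wset_split (m a b s : ℕ) :
    (WSet (m + 1) a b s).ncard = (HSet m a b s 1).ncard + (HSet m a b s 2).ncard := by
  have hu : WSet (m + 1) a b s = HSet m a b s 1 ∪ HSet m a b s 2 := by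
    ext w
    constructor
    · intro hw
      rcases hw.1 (Fin.last m) with h | h
      · exact Or.inl ⟨hw, h⟩
      · exact Or.inr ⟨hw, h⟩
    · rintro (⟨h, -⟩ | ⟨h, -⟩) <;> exact h
  have hd : Disjoint (HSet m a b s 1) (HSet m a b s 2) := by
    rw [Set.disjoint_left]
    rintro w ⟨-, h1⟩ ⟨-, h2⟩
    rw [h1] at h2; exact absurd h2 (by norm_num)
  rw [hu, Set.ncard_union_eq hd (hset_finite m a b s 1) (hset_finite m a b s 2)]

def gF : ℕ → ℕ → ℕ → ℕ
  | _, 0, 0 => 1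
  | _, 0, _+1 => 0
  | _, _+1, 0 => 0
  | a, b+1, s+1 => Nat.choose a (s+1) * Nat.choose b s

def hF : ℕ → ℕ → ℕ → ℕ
  | _, 0, _ => 0
  | a, b+1, s => Nat.choose a s * Nat.choose b s

lemma N1 (a b s : ℕ) : gF a b s + hF a b s = Nat.choose a s * Nat.choose b s := by
  match b, s with
  | 0, 0 => simp [gF, hF]
  | 0, s+1 => simp [gF, hF]
  | b+1, 0 => simp [gF, hF]
  | b+1, s+1 =>
    show Nat.choose a (s+1) * Nat.choose b s + Nat.choose a (s+1) * Nat.choose b (s+1) = _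
    rw [← Nat.mul_add, ← Nat.choose_succ_succ]

lemma N2 (a b s : ℕ) :
    gF a b s + (match s with | 0 => 0 | s'+1 => hF a b s') = gF (a+1) b s := by
  match b, s with
  | 0, 0 => simp [gF]
  | 0, s+1 => simp [gF, hF]
  | b+1, 0 => simp [gF]
  | b+1, s+1 =>
    show Nat.choose a (s+1) * Nat.choose b s + Nat.choose a s * Nat.choose b s = _
    show _ = Nat.choose (a+1) (s+1) * Nat.choose b s
    rw [Nat.choose_succ_succ a s, Nat.add_mul]
    ring


lemma tset_finite (m a b s c : ℕ) : (TSet m a b s c).Finite := by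
  apply Set.Finite.subset (Set.Finite.pi (fun i : Fin (m+1) => Set.finite_Icc 1 2))
  intro v hv i _
  rcases hv.1 i with h | h <;> simp [h]

lemma tset2_zero (m a s : ℕ) : TSet m a 0 s 2 = ∅ := by
  rw [Set.eq_empty_iff_forall_notMem]
  rintro v ⟨-, -, h2, -⟩
  simp at h2

lemma tset2_succ (m a b s : ℕ) : TSet m a (b + 1) s 2 = WSet (m + 1) a b s := by
  ext v
  simp only [TSet, WSet, Set.mem_setOf_eq]
  constructor
  · rintro ⟨hv, h1, h2, hd⟩
    norm_num at h1 h2 hd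
    exact ⟨hv, by omega, by omega, by omega⟩
  · rintro ⟨hv, h1, h2, hd⟩
    refine ⟨hv, ?_, ?_, ?_⟩ <;> norm_num <;> omega

lemma tset1_zero (m b s : ℕ) : TSet m 0 b s 1 = ∅ := by
  rw [Set.eq_empty_iff_forall_notMem]
  rintro v ⟨-, h1, -, -⟩
  simp at h1

lemma tset1_s0 (m a b : ℕ) : TSet m (a + 1) b 0 1 = HSet m a b 0 1 := by
  ext v
  simp only [TSet, HSet, WSet, Set.mem_setOf_eq]
  constructor
  · rintro ⟨hv, h1, h2, hd⟩
    have hlast : v (Fin.last m) = 1 := by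
      rcases hv (Fin.last m) with h | h
      · exact h
      · exfalso; rw [if_pos ⟨h, one_lt_two⟩] at hd; omega
    have hne : ¬(v (Fin.last m) = 2 ∧ (1:ℕ) < 2) := by rw [hlast]; omega
    rw [if_neg hne] at hd
    exact ⟨⟨hv, by norm_num at h1; omega, by norm_num at h2; omega, by omega⟩, hlast⟩
  · rintro ⟨⟨hv, h1, h2, hd⟩, hlast⟩
    refine ⟨hv, by norm_num; omega, by norm_num; omega, ?_⟩
    have hne : ¬(v (Fin.last m) = 2 ∧ (1:ℕ) < 2) := by rw [hlast]; omega
    rw [if_neg hne]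
    omega

lemma tset1_ssucc (m a b s : ℕ) :
    TSet m (a + 1) b (s + 1) 1 = HSet m a b (s + 1) 1 ∪ HSet m a b s 2 := by
  ext v
  simp only [TSet, HSet, WSet, Set.mem_setOf_eq, Set.mem_union]
  constructor
  · rintro ⟨hv, h1, h2, hd⟩
    rcases hv (Fin.last m) with h | h
    · left
      have hne : ¬(v (Fin.last m) = 2 ∧ (1:ℕ) < 2) := by rw [h]; omega
      rw [if_neg hne] at hd
      exact ⟨⟨hv, by norm_num at h1; omega, by norm_num at h2; omega, by omega⟩, h⟩
    · right
      rw [if_pos ⟨h, one_lt_two⟩] at hd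
      exact ⟨⟨hv, by norm_num at h1; omega, by norm_num at h2; omega, by omega⟩, h⟩
  · rintro (⟨⟨hv, h1, h2, hd⟩, hlast⟩ | ⟨⟨hv, h1, h2, hd⟩, hlast⟩)
    · refine ⟨hv, by norm_num; omega, by norm_num; omega, ?_⟩
      have hne : ¬(v (Fin.last m) = 2 ∧ (1:ℕ) < 2) := by rw [hlast]; omega
      rw [if_neg hne]
      omega
    · refine ⟨hv, by norm_num; omega, by norm_num; omega, ?_⟩
      rw [if_pos ⟨hlast, one_lt_two⟩]
      omega

lemma cnt_one (j : ℕ) (w : Fin 1 → ℕ) : cnt j w = if w 0 = j then 1 else 0 := by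
  unfold cnt
  rw [Finset.card_filter, Fin.sum_univ_one]

lemma hset0_mem (a b s c : ℕ) (w : Fin 1 → ℕ) :
    w ∈ HSet 0 a b s c ↔
      (w = fun _ => c) ∧ (if c = 1 then 1 else 0) = a ∧ (if c = 2 then 1 else 0) = b ∧
      s = 0 ∧ (c = 1 ∨ c = 2) := by
  simp only [HSet, WSet, Set.mem_setOf_eq]
  constructor
  · rintro ⟨⟨hv, h1, h2, hd⟩, hl⟩
    have hw : w = fun _ => c := by
      funext i
      have hi : i = Fin.last 0 := Fin.ext (by omega)
      rw [hi, hl]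
    have h0 : w 0 = c := by rw [hw]
    rw [cnt_one, h0] at h1 h2
    rw [des_one] at hd
    refine ⟨hw, h1, h2, hd.symm, ?_⟩
    have := hv 0
    rw [h0] at this
    exact this
  · rintro ⟨rfl, h1, h2, rfl, hc⟩
    refine ⟨⟨fun _ => hc, ?_, ?_, ?_⟩, rfl⟩
    · rw [cnt_one]; exact h1
    · rw [cnt_one]; exact h2
    · exact des_one _

lemma hset0_empty (a b s c : ℕ)
    (hn : ¬((if c = 1 then 1 else 0) = a ∧ (if c = 2 then 1 else 0) = b ∧ s = 0 ∧
      (c = 1 ∨ c = 2))) : (HSet 0 a b s c).ncard = 0 := by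
  have he : HSet 0 a b s c = ∅ := by
    rw [Set.eq_empty_iff_forall_notMem]
    intro w hw
    rw [hset0_mem] at hw
    exact hn ⟨hw.2.1, hw.2.2.1, hw.2.2.2.1, hw.2.2.2.2⟩
  rw [he, Set.ncard_empty]

lemma hset0_sing (a b s c : ℕ)
    (hp : (if c = 1 then 1 else 0) = a ∧ (if c = 2 then 1 else 0) = b ∧ s = 0 ∧
      (c = 1 ∨ c = 2)) : (HSet 0 a b s c).ncard = 1 := by
  have he : HSet 0 a b s c = {fun _ => c} := by
    ext w
    rw [hset0_mem]
    simp only [Set.mem_singleton_iff]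
    constructor
    · exact fun h => h.1
    · intro h
      exact ⟨h, hp.1, hp.2.1, hp.2.2.1, hp.2.2.2⟩
  rw [he, Set.ncard_singleton]

lemma hsing0 : (HSet 0 1 0 0 1).ncard = 1 := hset0_sing _ _ _ _ (by norm_num)
lemma hempty1 (s : ℕ) : (HSet 0 1 0 (s+1) 1).ncard = 0 := hset0_empty _ _ _ _ (by norm_num)
lemma hempty2 : (HSet 0 0 1 0 1).ncard = 0 := hset0_empty _ _ _ _ (by norm_num)
lemma hempty3 (s : ℕ) : (HSet 0 0 1 (s+1) 1).ncard = 0 := hset0_empty _ _ _ _ (by norm_num)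
lemma hempty4 (s : ℕ) : (HSet 0 1 0 s 2).ncard = 0 := hset0_empty _ _ _ _ (by norm_num)
lemma hsing1 : (HSet 0 0 1 0 2).ncard = 1 := hset0_sing _ _ _ _ (by norm_num)
lemma hempty5 (s : ℕ) : (HSet 0 0 1 (s+1) 2).ncard = 0 := hset0_empty _ _ _ _ (by norm_num)

lemma main : ∀ m a b s, a + b = m + 1 →
    (HSet m a b s 1).ncard = gF a b s ∧ (HSet m a b s 2).ncard = hF a b s := by
  intro m
  induction m with
  | zero =>
    intro a b s hab
    have hab' : (a = 1 ∧ b = 0) ∨ (a = 0 ∧ b = 1) := by omega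
    constructor
    · rcases hab' with ⟨rfl, rfl⟩ | ⟨rfl, rfl⟩
      · match s with
        | 0 => rw [hsing0]; simp [gF]
        | s+1 => rw [hempty1 s]; simp [gF]
      · match s with
        | 0 => rw [hempty2]; simp [gF]
        | s+1 => rw [hempty3 s]; simp [gF, Nat.choose_eq_zero_of_lt (Nat.succ_pos s)]
    · rcases hab' with ⟨rfl, rfl⟩ | ⟨rfl, rfl⟩
      · rw [hempty4]; simp [hF]
      · match s with
        | 0 => rw [hsing1]; simp [hF]
        | s+1 => rw [hempty5 s]; simp [hF, Nat.choose_eq_zero_of_lt (Nat.succ_pos s)]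
  | succ m ih =>
    intro a b s hab
    constructor
    · rw [hset_ncard_tset m a b s 1 (Or.inl rfl)]
      match a, s with
      | 0, s =>
        rw [tset1_zero, Set.ncard_empty]
        obtain ⟨b', rfl⟩ : ∃ b', b = b' + 1 := ⟨m + 1, by omega⟩
        match s with
        | 0 => simp [gF]
        | s+1 => simp [gF, Nat.choose_eq_zero_of_lt (Nat.succ_pos s)]
      | a+1, 0 =>
        rw [tset1_s0]
        have := (ih a b 0 (by omega)).1
        rw [this]
        have hN := N2 a b 0
        simpa using hN
      | a+1, s+1 =>
        rw [tset1_ssucc]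
        rw [Set.ncard_union_eq ?hd (hset_finite m a b (s+1) 1) (hset_finite m a b s 2)]
        case hd =>
          rw [Set.disjoint_left]
          rintro w ⟨-, h1⟩ ⟨-, h2⟩
          rw [h1] at h2
          exact absurd h2 (by norm_num)
        rw [(ih a b (s+1) (by omega)).1, (ih a b s (by omega)).2]
        have hN := N2 a b (s+1)
        simpa using hN
    · rw [hset_ncard_tset m a b s 2 (Or.inr rfl)]
      match b with
      | 0 =>
        rw [tset2_zero, Set.ncard_empty]
        rfl
      | b+1 =>
        rw [tset2_succ, wset_split, (ih a b s (by omega)).1, (ih a b s (by omega)).2]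
        rw [N1]
        rfl

end Stmt17

theorem stmt17 (a b s : ℕ) (ha : 1 ≤ a) (hb : 1 ≤ b) :
    wordCount {2} Set.univ (a + b) 2 (fun j => if j = 1 then a else b) s =
      Nat.choose a s * Nat.choose b s := by
  have hset : {w : Fin (a + b) → ℕ |
      (∀ i, 1 ≤ w i ∧ w i ≤ 2) ∧
      (∀ j, 1 ≤ j → j ≤ 2 → (Finset.univ.filter (fun i => w i = j)).card =
        (fun j => if j = 1 then a else b) j) ∧
      desXY {2} Set.univ w = s} = Stmt17.WSet (a + b) a b s := by
    ext w
    simp only [Set.mem_setOf_eq, Stmt17.WSet, Stmt17.cnt, Stmt17.des]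
    constructor
    · rintro ⟨hv, hcnt, hd⟩
      refine ⟨fun i => by have := hv i; omega, ?_, ?_, hd⟩
      · have := hcnt 1 le_rfl (by omega)
        simpa using this
      · have := hcnt 2 (by omega) le_rfl
        simpa using this
    · rintro ⟨hv, h1, h2, hd⟩
      refine ⟨fun i => by rcases hv i with h | h <;> omega, ?_, hd⟩
      intro j hj1 hj2
      interval_cases j
      · simpa using h1
      · simpa using h2
  unfold wordCount
  rw [hset]
  obtain ⟨m, hm⟩ : ∃ m, a + b = m + 1 := ⟨a + b - 1, by omega⟩
  rw [hm, Stmt17.wset_split, (Stmt17.main m a b s hm).1, (Stmt17.main m a b s hm).2, Stmt17.N1]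
end
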